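/- arXiv:2107.01147 — 8 statements merged into one kernel-verified Lean document; each statement's English description precedes it below -/
import Mathlib

section
/- Let C be a Cayley algebra over a field F. The set LocAut(C) of local automorphisms of C, i.e. linear maps φ such that for each x ∈ C there is an automorphism φₓ of C with φ(x) = φₓ(x), equals the group {φ ∈ O(C,n) : φ(1) = 1} of norm-preserving linear bijections fixing the identity. -/
open QuadraticMap

private lemma aux_mul_one {F C : Type*} [Field F] [NonAssocRing C] [Module F C]
    (ψ : C →ₗ[F] C) (hb : Function.Bijective ψ) (hm : ∀ a b : C, ψ (a * b) = ψ a * ψ b) :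
    ψ 1 = 1 := by
  have h : ∀ y : C, ψ 1 * y = y := by
    intro y
    obtain ⟨a, rfl⟩ := hb.2 y
    rw [← hm, one_mul]
  have := h 1
  rwa [mul_one] at this

/-- **Theorem `th:local_autos`.** The set of local automorphisms of a Cayley
algebra `C` equals `{φ ∈ O(C,n) : φ(1) = 1}`. The orbit lemma (two elements outside `F·1`
are conjugate under `Aut C` iff they have the same norm and trace) may be assumed. -/
theorem cayley_local_aut_iff_orthogonal_fixing_one {F : Type*} [Field F] {C : Type*}
    [NonAssocRing C] [Module F C] [SMulCommClass F C C] [IsScalarTower F C C]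
    (n : QuadraticForm F C)
    (hdim : Module.finrank F C = 8)
    (hcomp : ∀ x y : C, n (x * y) = n x * n y)
    (hnd : ∀ x : C, (∀ y : C, polar (⇑n) x y = 0) → x = 0)
    (halt : ∀ x y : C, x * (x * y) = (x * x) * y ∧ (x * y) * y = x * (y * y))
    (horbit : ∀ x y : C, (∀ c : F, x ≠ c • 1) → (∀ c : F, y ≠ c • 1) →
      ((∃ ψ : C →ₗ[F] C, (Function.Bijective ψ ∧ ∀ a b : C, ψ (a * b) = ψ a * ψ b) ∧
          ψ x = y) ↔
        (n x = n y ∧ polar (⇑n) x 1 = polar (⇑n) y 1)))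
    (φ : C →ₗ[F] C) :
    (∀ x : C, ∃ ψ : C →ₗ[F] C,
        (Function.Bijective ψ ∧ ∀ a b : C, ψ (a * b) = ψ a * ψ b) ∧ φ x = ψ x) ↔
      (Function.Bijective φ ∧ (∀ x : C, n (φ x) = n x) ∧ φ 1 = 1) := by
  have hFD : FiniteDimensional F C := FiniteDimensional.of_finrank_pos (by rw [hdim]; norm_num)
  constructor
  · intro h
    have hφ1 : φ 1 = 1 := by
      obtain ⟨ψ, ⟨hb, hm⟩, he⟩ := h 1
      rw [he, aux_mul_one ψ hb hm]
    have hnorm : ∀ x : C, n (φ x) = n x := by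
      intro x
      obtain ⟨ψ, ⟨hb, hm⟩, he⟩ := h x
      rw [he]
      by_cases hc : ∀ c : F, x ≠ c • 1
      · have hψ1 := aux_mul_one ψ hb hm
        have hc' : ∀ c : F, ψ x ≠ c • 1 := by
          intro c hcc
          have : ψ x = ψ (c • 1) := by rw [_root_.map_smul, hψ1, hcc]
          exact hc c (hb.1 this)
        have := (horbit x (ψ x) hc hc').mp ⟨ψ, ⟨hb, hm⟩, rfl⟩
        exact this.1.symm
      · push_neg at hc
        obtain ⟨c, rfl⟩ := hc
        rw [_root_.map_smul, aux_mul_one ψ hb hm]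
    have hinj : Function.Injective φ := by
      rw [← LinearMap.ker_eq_bot, LinearMap.ker_eq_bot']
      intro m hm0
      apply hnd
      intro y
      have hp : polar ⇑n m y = polar ⇑n (φ m) (φ y) := by
        simp only [QuadraticMap.polar, ← map_add, hnorm]
      rw [hp, hm0]
      simp [QuadraticMap.polar]
    exact ⟨⟨hinj, (LinearMap.injective_iff_surjective).mp hinj⟩, hnorm, hφ1⟩
  · rintro ⟨hbij, hnorm, h1⟩
    intro x
    by_cases hc : ∀ c : F, x ≠ c • 1
    · have hc' : ∀ c : F, φ x ≠ c • 1 := by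
        intro c hcc
        apply hc c
        apply hbij.1
        rw [hcc, _root_.map_smul, h1]
      have hp : polar ⇑n x 1 = polar ⇑n (φ x) 1 := by
        conv_rhs => rw [← h1]
        simp only [QuadraticMap.polar, ← map_add, hnorm]
      obtain ⟨ψ, hψ, he⟩ := (horbit x (φ x) hc hc').mpr ⟨(hnorm x).symm, hp⟩
      exact ⟨ψ, hψ, he.symm⟩
    · push_neg at hc
      obtain ⟨c, rfl⟩ := hc
      exact ⟨LinearMap.id, ⟨Function.bijective_id, fun a b => rfl⟩, by
        simp [_root_.map_smul, h1]⟩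
end

section
/- Let C be a Cayley algebra over a field F of characteristic 2 with norm n, and let a ∈ C satisfy n(a,1) = 1. Let W = (F·1 + F·a)^⊥ with respect to the polar form, so C₀ = F·1 ⊕ W. Then the kernel of the restriction homomorphism Φ : {φ ∈ O(C,n) : φ(1)=1} → O(C₀,n) is a cyclic group of order 2; precisely, φ ∈ ker Φ if and only if φ fixes 1 and all of W, in which case φ(a) = a or φ(a) = a + 1. -/
open QuadraticMap

/-- Characteristic 2: for `a` with `n(a,1) = 1` and
`W = (F·1 + F·a)^⊥`, an orthogonal map `φ` fixing `1` lies in the kernel of the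
restriction to `C₀` iff it fixes `1` and all of `W`; in that case `φ(a) = a` or
`φ(a) = a + 1` (so the kernel is cyclic of order 2). -/
theorem cayley_char_two_kernel_restriction {F : Type*} [Field F] {C : Type*}
    [NonAssocRing C] [Module F C] [SMulCommClass F C C] [IsScalarTower F C C]
    (n : QuadraticForm F C)
    (hdim : Module.finrank F C = 8)
    (hcomp : ∀ x y : C, n (x * y) = n x * n y)
    (hnd : ∀ x : C, (∀ y : C, polar (⇑n) x y = 0) → x = 0)
    (halt : ∀ x y : C, x * (x * y) = (x * x) * y ∧ (x * y) * y = x * (y * y))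
    (hchar : (2 : F) = 0)
    (a : C) (ha : polar (⇑n) a 1 = 1)
    (W : Submodule F C)
    (hW : ∀ x : C, x ∈ W ↔ (polar (⇑n) x 1 = 0 ∧ polar (⇑n) x a = 0))
    (φ : C ≃ₗ[F] C) (hφn : ∀ x : C, n (φ x) = n x) (hφ1 : φ 1 = 1) :
    ((∀ x : C, polar (⇑n) x 1 = 0 → φ x = x) ↔ (φ 1 = 1 ∧ ∀ w ∈ W, φ w = w)) ∧
    ((∀ x : C, polar (⇑n) x 1 = 0 → φ x = x) → (φ a = a ∨ φ a = a + 1)) := by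
  -- basic char-2 facts
  have h2F : ∀ f : F, f + f = 0 := fun f => by
    rw [← two_mul, hchar, zero_mul]
  have hnegF : ∀ f : F, -f = f := fun f =>
    neg_eq_of_add_eq_zero_left (h2F f)
  have h2C : ∀ x : C, x + x = 0 := fun x => by
    rw [← two_smul F x, hchar, zero_smul]
  -- polar is zero on the diagonal
  have hself : ∀ x : C, polar (⇑n) x x = 0 := by
    intro x
    have hxx : n (x + x) = 0 := by rw [h2C x, map_zero]
    simp only [polar, hxx, zero_sub, sub_eq_iff_eq_add, zero_add, neg_add_rev]
    rw [hnegF]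
  -- φ preserves the polar form
  have hφp : ∀ x y : C, polar (⇑n) (φ x) (φ y) = polar (⇑n) x y := by
    intro x y
    simp [polar, ← map_add, hφn]
  -- symmetry
  have hsymm : ∀ x y : C, polar (⇑n) x y = polar (⇑n) y x := fun x y =>
    polar_comm (⇑n) x y
  -- bilinearity (specialized)
  have haddl : ∀ x x' y : C, polar (⇑n) (x + x') y
      = polar (⇑n) x y + polar (⇑n) x' y := fun x x' y => polar_add_left n x x' y
  have hsmull : ∀ (c : F) (x y : C), polar (⇑n) (c • x) y = c * polar (⇑n) x y :=
    fun c x y => polar_smul_left n c x y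
  -- decomposition of C₀ : x = c•1 + w with w ∈ W
  have hdec : ∀ x : C, polar (⇑n) x 1 = 0 →
      (x + polar (⇑n) x a • 1) ∈ W := by
    intro x hx
    rw [hW]
    constructor
    · rw [haddl, hsmull, hx, hself, mul_zero, add_zero]
    · rw [haddl, hsmull, hsymm 1 a, ha, mul_one, h2F]
  constructor
  · constructor
    · intro h
      refine ⟨hφ1, fun w hw => h w ((hW w).mp hw).1⟩
    · rintro ⟨h1, hWfix⟩ x hx
      set c := polar (⇑n) x a with hc
      have hw : (x + c • 1) ∈ W := hdec x hx
      have hx' : x = c • 1 + (x + c • 1) := by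
        rw [add_comm (c • 1), add_assoc, ← add_smul, h2F, zero_smul, add_zero]
      calc φ x = φ (c • 1 + (x + c • 1)) := by rw [← hx']
        _ = c • φ 1 + φ (x + c • 1) := by rw [map_add, _root_.map_smul]
        _ = c • 1 + (x + c • 1) := by rw [h1, hWfix _ hw]
        _ = x := hx'.symm
  · intro hfix
    set z := φ a + a with hz
    -- polar z y = 0 for y ∈ C₀
    have hz0 : ∀ y : C, polar (⇑n) y 1 = 0 → polar (⇑n) z y = 0 := by
      intro y hy
      have h1' : polar (⇑n) (φ a) y = polar (⇑n) a y := by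
        conv_lhs => rw [← hfix y hy]
        exact hφp a y
      rw [hz, haddl, h1', h2F]
    set c := polar (⇑n) z a with hc
    set u := z + c • 1 with hu
    have hu0 : ∀ y : C, polar (⇑n) u y = 0 := by
      intro y
      set p := polar (⇑n) y 1 with hp
      have hy' : polar (⇑n) (y + p • a) 1 = 0 := by
        rw [haddl, hsmull, ha, mul_one, h2F]
      have hzy' : polar (⇑n) z (y + p • a) = 0 := hz0 _ hy'
      have hexp : polar (⇑n) z (y + p • a)
          = polar (⇑n) z y + p * polar (⇑n) z a := by
        rw [hsymm z, haddl, hsymm y z, hsmull, hsymm a z]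
      rw [hexp, ← hc] at hzy'
      have hzy : polar (⇑n) z y = p * c := by
        have h' := eq_neg_of_add_eq_zero_left hzy'
        rwa [hnegF] at h'
      have h1y : polar (⇑n) (1 : C) y = p := by
        rw [hsymm 1 y]
      rw [hu, haddl, hzy, hsmull, h1y, mul_comm c p, h2F]
    have huz : u = 0 := hnd u hu0
    have hza : z = c • 1 := by
      have h' : z + c • 1 + c • 1 = 0 + c • 1 := by rw [← hu, huz]
      rwa [add_assoc, h2C, add_zero, zero_add] at h'
    have hφa : φ a = a + c • 1 := by
      have h' : φ a + a + a = c • 1 + a := by rw [← hz, hza]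
      rwa [add_assoc, h2C, add_zero, add_comm (c • 1) a] at h'
    -- norm constraint on c
    have hn1 : n (1 : C) * n (1 : C) = n 1 := by
      have := hcomp 1 1; rw [one_mul] at this; exact this.symm
    have hceq : c * c * n 1 + c = 0 := by
      have h1 : n (φ a) = n a := hφn a
      have h2 : n (a + c • 1)
          = n a + n (c • 1) + polar (⇑n) a (c • 1) := by
        rw [polar]; ring
      have h3 : polar (⇑n) a (c • 1) = c := by
        rw [hsymm, hsmull, hsymm 1 a, ha, mul_one]
      have h4 : n ((c : F) • (1 : C)) = c * c * n 1 := by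
        rw [QuadraticMap.map_smul, smul_eq_mul]
      rw [hφa, h2, h3, h4] at h1
      linear_combination h1
    by_cases hc0 : c = 0
    · left
      rw [hφa, hc0, zero_smul, add_zero]
    · right
      have hcc : c * (c * n 1 + 1) = 0 := by
        rw [mul_add, mul_one, ← mul_assoc]; exact hceq
      have hcn1 : c * n 1 + 1 = 0 := by
        rcases mul_eq_zero.mp hcc with h | h
        · exact absurd h hc0
        · exact h
      have hcn1' : c * n 1 = 1 := by
        linear_combination hcn1 - h2F 1
      have hn1ne : n (1 : C) ≠ 0 := by
        intro h; rw [h, mul_zero] at hcn1'; exact zero_ne_one hcn1'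
      have hn11 : n (1 : C) = 1 := by
        have h' : n (1 : C) * n 1 = 1 * n 1 := by rw [hn1, one_mul]
        exact mul_right_cancel₀ hn1ne h'
      have hc1 : c = 1 := by
        rw [hn11, mul_one] at hcn1'; exact hcn1'
      rw [hφa, hc1, one_smul]
end

section
/- Let F be a field of characteristic 2 and let (V, n) be a nondegenerate quadratic space with V = F·1 ⊕ W, where n(1) = 1 is anisotropic on F·1 and the polar form vanishes on (F·1, F·1), concretely, the trace-zero part C₀ of a Cayley algebra. Then every isometry φ ∈ O(C₀,n) fixes 1, and for w ∈ W one has φ(w) = α(w)·1 + σ(w), where σ ∈ Sp(W, n(·,·)) is a symplectic transformation of W for the alternating polar form and α : W → F is the linear map determined by α(w)² = n(w) − n(σ(w)). -/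
open QuadraticMap

/-- Characteristic 2: every isometry `φ` of `(C₀, n)` fixes `1`, and on
`W = (F·1 + F·a)^⊥` it decomposes as `φ(w) = α(w)·1 + σ(w)` with `σ` a symplectic
transformation of `W` for the alternating polar form and `α : W → F` linear with
`α(w)² = n(w) − n(σ(w))`. -/
theorem cayley_char_two_isometry_decomposition {F : Type*} [Field F] {C : Type*}
    [NonAssocRing C] [Module F C] [SMulCommClass F C C] [IsScalarTower F C C]
    (n : QuadraticForm F C)
    (hdim : Module.finrank F C = 8)
    (hcomp : ∀ x y : C, n (x * y) = n x * n y)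
    (hnd : ∀ x : C, (∀ y : C, polar (⇑n) x y = 0) → x = 0)
    (halt : ∀ x y : C, x * (x * y) = (x * x) * y ∧ (x * y) * y = x * (y * y))
    (hchar : (2 : F) = 0)
    (a : C) (ha : polar (⇑n) a 1 = 1)
    (C₀ : Submodule F C) (hC₀ : ∀ x : C, x ∈ C₀ ↔ polar (⇑n) x 1 = 0)
    (W : Submodule F C)
    (hW : ∀ x : C, x ∈ W ↔ (polar (⇑n) x 1 = 0 ∧ polar (⇑n) x a = 0))
    (hWC₀ : W ≤ C₀) (h1 : (1 : C) ∈ C₀)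
    (φ : ↥C₀ ≃ₗ[F] ↥C₀) (hφn : ∀ x : ↥C₀, n ((φ x : C)) = n ((x : C))) :
    φ ⟨1, h1⟩ = ⟨1, h1⟩ ∧
    ∃ σ : ↥W ≃ₗ[F] ↥W,
      (∀ w w' : ↥W, polar (⇑n) ((σ w : C)) ((σ w' : C)) = polar (⇑n) (w : C) (w' : C)) ∧
      ∃ α : ↥W →ₗ[F] F,
        (∀ w : ↥W, ((φ ⟨(w : C), hWC₀ w.2⟩ : C)) = α w • (1 : C) + (σ w : C)) ∧
        (∀ w : ↥W, (α w) ^ 2 = n ((w : C)) - n ((σ w : C))) := by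
  classical
  have hFD : FiniteDimensional F C := Module.finite_of_finrank_pos (by rw [hdim]; norm_num)
  have hpolar_def : ∀ x y : C, polar (⇑n) x y = n (x + y) - n x - n y := fun x y => rfl
  -- n 1 = 1
  have hn1 : n (1 : C) = 1 := by
    have h := hcomp 1 1
    rw [one_mul] at h
    have h0 : n (1 : C) = 0 ∨ n (1 : C) = 1 := by
      rcases mul_eq_zero.mp (show n (1:C) * (n (1:C) - 1) = 0 by ring_nf; linear_combination -h) with h' | h'
      · exact Or.inl h'
      · exact Or.inr (sub_eq_zero.mp h')
    rcases h0 with h' | h'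
    · exfalso
      have hall : ∀ x : C, n x = 0 := fun x => by
        have := hcomp x 1; rw [mul_one, h', mul_zero] at this; exact this
      have : polar (⇑n) a 1 = 0 := by rw [hpolar_def, hall, hall, hall]; ring
      rw [ha] at this; exact one_ne_zero this
    · exact h'
  -- φ preserves polar
  have hφp : ∀ x y : ↥C₀, polar (⇑n) ((φ x : C)) ((φ y : C)) = polar (⇑n) (x : C) (y : C) := by
    intro x y
    rw [hpolar_def, hpolar_def, ← Submodule.coe_add, ← map_add, hφn, hφn, hφn,
      Submodule.coe_add]
  have hpol1 : ∀ x : C, x ∈ C₀ → polar (⇑n) (1 : C) x = 0 := fun x hx =>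
    (polar_comm (⇑n) 1 x).trans ((hC₀ x).mp hx)
  have hpol11 : polar (⇑n) (1 : C) (1 : C) = 0 := hpol1 1 h1
  -- Step: φ 1 = 1
  set u : C := ((φ ⟨1, h1⟩ : ↥C₀) : C) with hu_def
  have huC₀ : u ∈ C₀ := (φ ⟨1, h1⟩).2
  set c : F := polar (⇑n) u a with hc_def
  have hker : ∀ y₀ : C, y₀ ∈ C₀ → polar (⇑n) u y₀ = 0 := by
    intro y₀ hy₀
    have h2 : ((φ (φ.symm ⟨y₀, hy₀⟩) : ↥C₀) : C) = y₀ := by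
      rw [φ.apply_symm_apply]
    calc polar (⇑n) u y₀ = polar (⇑n) ((φ ⟨1,h1⟩ : ↥C₀) : C) ((φ (φ.symm ⟨y₀, hy₀⟩) : ↥C₀) : C) := by
          rw [h2]
      _ = polar (⇑n) (1 : C) ((φ.symm ⟨y₀, hy₀⟩ : ↥C₀) : C) := hφp _ _
      _ = 0 := hpol1 _ (φ.symm ⟨y₀, hy₀⟩).2
  have hu_eq : u = c • (1 : C) := by
    have key : ∀ y : C, polar (⇑n) (u - c • 1) y = 0 := by
      intro y
      set t : F := polar (⇑n) y 1 with ht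
      have hy₀ : y - t • a ∈ C₀ := by
        rw [hC₀, polar_sub_left, polar_smul_left, smul_eq_mul, ha, ← ht, mul_one, sub_self]
      have hdecomp : y = (y - t • a) + t • a := by abel
      have hA : polar (⇑n) u y = t * c := by
        conv_lhs => rw [hdecomp]
        rw [polar_add_right, polar_smul_right, hker _ hy₀, smul_eq_mul, ← hc_def]
        ring
      have hB : polar (⇑n) (c • (1 : C)) y = c * t := by
        conv_lhs => rw [hdecomp]
        rw [polar_smul_left, polar_add_right, polar_smul_right, hpol1 _ hy₀,
          polar_comm (⇑n) (1 : C) a, ha, smul_eq_mul, smul_eq_mul]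
        ring
      rw [polar_sub_left, hA, hB]
      ring
    have h0 := hnd _ key
    exact sub_eq_zero.mp h0
  have hc1 : c = 1 := by
    have hnu : n u = 1 := by rw [hu_def, hφn]; simpa using hn1
    have hc2 : c * c = 1 := by
      have : n (c • (1 : C)) = 1 := by rw [← hu_eq]; exact hnu
      rw [QuadraticMap.map_smul, smul_eq_mul, hn1, mul_one] at this
      exact this
    have hz : (c - 1) * (c - 1) = 0 := by linear_combination hc2 + (1 - c) * hchar
    exact sub_eq_zero.mp (mul_self_eq_zero.mp hz)
  have hφ1 : φ ⟨1, h1⟩ = ⟨1, h1⟩ := by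
    apply Subtype.ext
    rw [← hu_def, hu_eq, hc1, one_smul]
  refine ⟨hφ1, ?_⟩
  -- the map ψ : W → C, w ↦ φ(w) seen in C
  set ψ : ↥W →ₗ[F] C :=
    C₀.subtype ∘ₗ (φ : ↥C₀ →ₗ[F] ↥C₀) ∘ₗ Submodule.inclusion hWC₀ with hψdef
  have hψ : ∀ w : ↥W, ψ w = ((φ ⟨(w : C), hWC₀ w.2⟩ : ↥C₀) : C) := fun w => rfl
  have hψC₀ : ∀ w : ↥W, ψ w ∈ C₀ := fun w => (φ ⟨(w : C), hWC₀ w.2⟩).2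
  -- α
  set α : ↥W →ₗ[F] F := (LinearMap.flip n.polarBilin a) ∘ₗ ψ with hαdef
  have hα : ∀ w : ↥W, α w = polar (⇑n) (ψ w) a := fun w => rfl
  -- σ as a map to C
  set σ' : ↥W →ₗ[F] C := ψ - α.smulRight (1 : C) with hσ'def
  have hσ' : ∀ w : ↥W, σ' w = ψ w - α w • (1 : C) := fun w => rfl
  have hmem : ∀ w : ↥W, σ' w ∈ W := by
    intro w
    rw [hW, hσ' w]
    constructor
    · rw [polar_sub_left, polar_smul_left, (hC₀ _).mp (hψC₀ w), hpol11, smul_zero,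
        sub_zero]
    · rw [polar_sub_left, polar_smul_left, ← hα, smul_eq_mul,
        polar_comm (⇑n) (1 : C) a, ha, mul_one, sub_self]
  set σ₀ : ↥W →ₗ[F] ↥W := σ'.codRestrict W hmem with hσ₀def
  have hσ₀ : ∀ w : ↥W, ((σ₀ w : C)) = ψ w - α w • (1 : C) := fun w => rfl
  have hinj : Function.Injective σ₀ := by
    intro w w' hww'
    have h0 : σ₀ (w - w') = 0 := by rw [_root_.map_sub, hww', sub_self]
    have h0' : ψ (w - w') = α (w - w') • (1 : C) := by
      have h := hσ₀ (w - w')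
      rw [h0, ZeroMemClass.coe_zero] at h
      exact sub_eq_zero.mp h.symm
    set v := w - w' with hv
    -- φ ⟨v⟩ = α v • ⟨1⟩, apply injectivity of φ
    have hcoe : ((φ ⟨(v : C), hWC₀ v.2⟩ : ↥C₀) : C) = ((α v • (⟨1, h1⟩ : ↥C₀) : ↥C₀) : C) := by
      rw [← hψ, h0']; rfl
    have h2 : φ ⟨(v : C), hWC₀ v.2⟩ = α v • (⟨1, h1⟩ : ↥C₀) := Subtype.ext hcoe
    have h3 : φ (α v • (⟨1, h1⟩ : ↥C₀)) = α v • (⟨1, h1⟩ : ↥C₀) := by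
      rw [_root_.map_smul, hφ1]
    have h4 : (⟨(v : C), hWC₀ v.2⟩ : ↥C₀) = α v • (⟨1, h1⟩ : ↥C₀) :=
      φ.injective (by rw [h2, h3])
    have h5 : (v : C) = α v • (1 : C) := congrArg Subtype.val h4
    have h6 : polar (⇑n) (v : C) a = 0 := ((hW (v : C)).mp v.2).2
    rw [h5, polar_smul_left, polar_comm (⇑n) (1 : C) a, ha, smul_eq_mul, mul_one] at h6
    have h7 : (v : C) = 0 := by rw [h5, h6, zero_smul]
    have : v = 0 := Subtype.ext h7
    rwa [hv, sub_eq_zero] at this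
  set σ : ↥W ≃ₗ[F] ↥W := LinearEquiv.ofBijective σ₀
    ⟨hinj, LinearMap.injective_iff_surjective.mp hinj⟩ with hσdef
  have hσeq : ∀ w : ↥W, ((σ w : C)) = ψ w - α w • (1 : C) := fun w => hσ₀ w
  have hσC₀ : ∀ w : ↥W, ((σ w : C)) ∈ C₀ := fun w => hWC₀ (σ w).2
  refine ⟨σ, ?_, α, ?_, ?_⟩
  · intro w w'
    have hfp : polar (⇑n) (ψ w) (ψ w') = polar (⇑n) (w : C) (w' : C) := by
      rw [hψ, hψ]; exact hφp _ _
    rw [hσeq, hσeq]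
    simp only [polar_sub_left, polar_sub_right, polar_smul_left, polar_smul_right,
      smul_eq_mul]
    rw [(hC₀ _).mp (hψC₀ w), hpol1 _ (hψC₀ w'), hpol11, hfp]
    ring
  · intro w
    rw [← hψ, hσeq]
    abel
  · intro w
    have hnw : n ((w : C)) = n (ψ w) := by rw [hψ, hφn]
    have hsplit : ψ w = α w • (1 : C) + (σ w : C) := by rw [hσeq]; abel
    have hnψ : n (ψ w) = (α w) * (α w) * n (1 : C) + n ((σ w : C))
        + α w * polar (⇑n) (1 : C) ((σ w : C)) := by
      rw [hsplit]
      have hp := hpolar_def (α w • (1 : C)) ((σ w : C))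
      rw [QuadraticMap.map_smul, polar_smul_left, smul_eq_mul, smul_eq_mul] at hp
      linear_combination -hp
    rw [hpol1 _ (hσC₀ w), hn1] at hnψ
    rw [hnw, hnψ]
    ring
end

section
/- Let F be a perfect field of characteristic 2 and let (C₀, n) be as above (the trace-zero part of a Cayley algebra, with radical F·1 of the polar form and W a complement). Then the map O(C₀,n) → Sp(W, n(·,·)), φ ↦ σ (where φ(w) = α(w)·1 + σ(w) for w ∈ W) is a group isomorphism. -/
open QuadraticMap

/-- Over a perfect field `F` of characteristic 2, the map
`O(C₀,n) → Sp(W, n(·,·))`, `φ ↦ σ` (where `φ(w) = α(w)·1 + σ(w)` on `W`), is a group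
isomorphism: there is a bijection compatible with the decomposition and with
composition. -/
theorem cayley_char_two_perfect_orthogonal_iso_symplectic {F : Type*} [Field F]
    [PerfectField F] {C : Type*}
    [NonAssocRing C] [Module F C] [SMulCommClass F C C] [IsScalarTower F C C]
    (n : QuadraticForm F C)
    (hdim : Module.finrank F C = 8)
    (hcomp : ∀ x y : C, n (x * y) = n x * n y)
    (hnd : ∀ x : C, (∀ y : C, polar (⇑n) x y = 0) → x = 0)
    (halt : ∀ x y : C, x * (x * y) = (x * x) * y ∧ (x * y) * y = x * (y * y))
    (hchar : (2 : F) = 0)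
    (a : C) (ha : polar (⇑n) a 1 = 1)
    (C₀ : Submodule F C) (hC₀ : ∀ x : C, x ∈ C₀ ↔ polar (⇑n) x 1 = 0)
    (W : Submodule F C)
    (hW : ∀ x : C, x ∈ W ↔ (polar (⇑n) x 1 = 0 ∧ polar (⇑n) x a = 0))
    (hWC₀ : W ≤ C₀) (h1 : (1 : C) ∈ C₀) :
    ∃ f : {φ : ↥C₀ ≃ₗ[F] ↥C₀ // ∀ x : ↥C₀, n ((φ x : C)) = n ((x : C))} →
        {σ : ↥W ≃ₗ[F] ↥W //
          ∀ w w' : ↥W, polar (⇑n) ((σ w : C)) ((σ w' : C)) = polar (⇑n) (w : C) (w' : C)},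
      Function.Bijective f ∧
      (∀ φ (w : ↥W), ∃ c : F,
        ((φ.1 ⟨(w : C), hWC₀ w.2⟩ : C)) = c • (1 : C) + ((f φ).1 w : C)) ∧
      (∀ φ ψ χ : {φ : ↥C₀ ≃ₗ[F] ↥C₀ // ∀ x : ↥C₀, n ((φ x : C)) = n ((x : C))},
        χ.1 = φ.1.trans ψ.1 → (f χ).1 = (f φ).1.trans (f ψ).1) := by
  classical
  -- characteristic 2 instances and arithmetic
  haveI hC2 : CharP F 2 :=
    (CharP.ringChar_of_prime_eq_zero Nat.prime_two hchar) ▸ ringChar.charP F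
  haveI : Fact (Nat.Prime 2) := ⟨Nat.prime_two⟩
  have hcc : ∀ c : F, c + c = 0 := fun c => by rw [← two_mul, hchar, zero_mul]
  have hneg : ∀ c : F, -c = c := fun c => neg_eq_of_add_eq_zero_left (hcc c)
  have hsub : ∀ c d : F, c - d = c + d := fun c d => by rw [sub_eq_add_neg, hneg]
  have hswap : ∀ c d : F, c - d = d - c := fun c d => by rw [hsub, hsub, add_comm]
  have hfrob : ∀ c d : F, (c + d) * (c + d) = c * c + d * d := fun c d => by
    linear_combination (c * d) * hchar
  have hsqr : ∀ c d : F, c * c = d * d → c = d := by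
    intro c d h
    have h2 : (c + d) * (c + d) = 0 := by rw [hfrob, h]; exact hcc _
    have h3 : c + d = 0 := by rcases mul_eq_zero.mp h2 with h' | h' <;> exact h'
    exact (eq_neg_of_add_eq_zero_left h3).trans (hneg d)
  have hsq : ∀ c : F, ∃ d : F, d * d = c := by
    intro c
    obtain ⟨d, hd⟩ := surjective_frobenius F 2 c
    exact ⟨d, by rwa [frobenius_def, pow_two] at hd⟩
  choose sqrt hsqrt using hsq
  -- polar form basics
  have hpC₀ : ∀ x : C, x ∈ C₀ → polar (⇑n) x 1 = 0 := fun x hx => (hC₀ x).1 hx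
  have hp1 : ∀ x : C, x ∈ C₀ → polar (⇑n) (1 : C) x = 0 := fun x hx =>
    (polar_comm _ _ _).trans (hpC₀ x hx)
  have hpa : ∀ x : C, x ∈ W → polar (⇑n) x a = 0 := fun x hx => ((hW x).1 hx).2
  have hpa' : polar (⇑n) (1 : C) a = 1 := (polar_comm _ _ _).trans ha
  have h11 : polar (⇑n) (1 : C) (1 : C) = 0 := hp1 1 h1
  have hn1 : n (1 : C) = 1 := by
    have h := hcomp 1 1
    rw [mul_one] at h
    have h0 : n (1 : C) * (n (1 : C) - 1) = 0 := by linear_combination -h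
    rcases mul_eq_zero.mp h0 with h0 | h0
    · exfalso
      have hz : ∀ x : C, n x = 0 := fun x => by
        have hx := hcomp x 1
        rwa [mul_one, h0, mul_zero] at hx
      rw [polar, hz, hz, hz] at ha
      simp at ha
    · exact sub_eq_zero.mp h0
  have hnsplit : ∀ (c : F) (u : C), polar (⇑n) u 1 = 0 → n (c • (1 : C) + u) = c * c + n u := by
    intro c u hu
    have e1 : polar (⇑n) (c • (1 : C)) u = 0 := by
      rw [polar_smul_left, polar_comm, hu, smul_zero]
    rw [QuadraticMap.map_add (⇑n), e1, QuadraticMap.map_smul, hn1, add_zero, smul_eq_mul,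
      mul_one]
  have hmemW : ∀ x : C, x ∈ C₀ → x - polar (⇑n) x a • 1 ∈ W := by
    intro x hx
    rw [hW]
    constructor
    · rw [polar_sub_left, polar_smul_left, h11, smul_zero, hpC₀ x hx, sub_zero]
    · rw [polar_sub_left, polar_smul_left, hpa', smul_eq_mul, mul_one, sub_self]
  -- the decomposition maps
  let π : ↥C₀ →ₗ[F] F :=
    { toFun := fun x => polar (⇑n) (x : C) a
      map_add' := fun x y => by simp [polar_add_left]
      map_smul' := fun c x => by simp [polar_smul_left] }
  let ρ : ↥C₀ →ₗ[F] ↥W :=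
    { toFun := fun x => ⟨(x : C) - polar (⇑n) (x : C) a • 1, hmemW x x.2⟩
      map_add' := fun x y => by
        apply Subtype.ext
        simp [polar_add_left, add_smul]
        abel
      map_smul' := fun c x => by
        apply Subtype.ext
        simp [polar_smul_left, smul_sub, smul_smul] }
  let ι : ↥W →ₗ[F] ↥C₀ := Submodule.inclusion hWC₀
  let one₀ : ↥C₀ := ⟨1, h1⟩
  have hπ : ∀ x : ↥C₀, π x = polar (⇑n) (x : C) a := fun _ => rfl
  have hρ : ∀ x : ↥C₀, ((ρ x : ↥W) : C) = (x : C) - π x • 1 := fun _ => rfl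
  have hι : ∀ w : ↥W, ((ι w : ↥C₀) : C) = (w : C) := fun _ => rfl
  have hπι : ∀ w : ↥W, π (ι w) = 0 := fun w => by rw [hπ, hι]; exact hpa _ w.2
  have hρι : ∀ w : ↥W, ρ (ι w) = w := fun w =>
    Subtype.ext (by rw [hρ, hι, hπι, zero_smul, sub_zero])
  have hπ1 : π one₀ = 1 := hpa'
  have hρ1 : ρ one₀ = 0 := by
    apply Subtype.ext
    rw [hρ, hπ1, one_smul]
    exact (sub_self _).trans (ZeroMemClass.coe_zero W).symm
  have hdecC : ∀ x : ↥C₀, (x : C) = π x • 1 + ((ρ x : ↥W) : C) := by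
    intro x
    rw [hρ]
    abel
  have hdec : ∀ x : ↥C₀, x = π x • one₀ + ι (ρ x) := by
    intro x
    apply Subtype.ext
    rw [Submodule.coe_add, SetLike.val_smul, hι]
    exact hdecC x
  -- orthogonal maps preserve the polar form and fix 1
  have hOpol : ∀ (e : ↥C₀ ≃ₗ[F] ↥C₀), (∀ x : ↥C₀, n ((e x : C)) = n ((x : C))) →
      ∀ x y : ↥C₀, polar (⇑n) ((e x : C)) ((e y : C)) = polar (⇑n) (x : C) (y : C) := by
    intro e he x y
    simp only [polar]
    rw [← Submodule.coe_add, ← _root_.map_add, he, he, he, Submodule.coe_add]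
  have hfix : ∀ (e : ↥C₀ ≃ₗ[F] ↥C₀), (∀ x : ↥C₀, n ((e x : C)) = n ((x : C))) →
      e one₀ = one₀ := by
    intro e he
    set u : C := ((e one₀ : ↥C₀) : C) with hu
    have hrad : ∀ z : C, z ∈ C₀ → polar (⇑n) u z = 0 := by
      intro z hz
      have h8 := hOpol e he one₀ (e.symm ⟨z, hz⟩)
      rw [e.apply_symm_apply] at h8
      exact h8.trans (hp1 _ (e.symm ⟨z, hz⟩).2)
    set lam : F := polar (⇑n) u a with hlam
    have hv : u - lam • 1 = 0 := by
      apply hnd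
      intro y
      set μ : F := polar (⇑n) y 1 with hμ
      have hz : y - μ • a ∈ C₀ := by
        rw [hC₀, polar_sub_left, polar_smul_left, ha, smul_eq_mul, mul_one, hμ, sub_self]
      have main : polar (⇑n) (u - lam • 1) y =
          polar (⇑n) (u - lam • 1) (y - μ • a) + μ • polar (⇑n) (u - lam • 1) a := by
        rw [← polar_smul_right, ← polar_add_right, sub_add_cancel]
      have hA : polar (⇑n) (u - lam • 1) (y - μ • a) = 0 := by
        rw [polar_sub_left, polar_smul_left, hrad _ hz, hp1 _ hz, smul_zero, sub_zero]
      have hB : polar (⇑n) (u - lam • 1) a = 0 := by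
        rw [polar_sub_left, polar_smul_left, hpa', smul_eq_mul, mul_one, ← hlam, sub_self]
      rw [main, hA, hB, smul_zero, add_zero]
    have hu1 : u = lam • 1 := by rwa [sub_eq_zero] at hv
    have h2 : n u = 1 := (he one₀).trans hn1
    have h4 : lam * lam = 1 * 1 := by
      rw [hu1, QuadraticMap.map_smul, hn1, smul_eq_mul, mul_one] at h2
      rw [h2, one_mul]
    have hlam1 : lam = 1 := hsqr _ _ h4
    apply Subtype.ext
    rw [← hu, hu1, hlam1, one_smul]
  have herase : ∀ (g : ↥C₀ ≃ₗ[F] ↥C₀), g one₀ = one₀ →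
      ∀ x : ↥C₀, ρ (g (ι (ρ x))) = ρ (g x) := by
    intro g hg x
    have h5 : ι (ρ x) = x - π x • one₀ := by
      rw [eq_sub_iff_add_eq, add_comm]
      exact (hdec x).symm
    rw [h5, _root_.map_sub, _root_.map_smul, hg, _root_.map_sub, _root_.map_smul, hρ1,
      smul_zero, sub_zero]
  have hπval : ∀ (e : ↥C₀ ≃ₗ[F] ↥C₀), (∀ x : ↥C₀, n ((e x : C)) = n ((x : C))) →
      ∀ w : ↥W, π (e (ι w)) * π (e (ι w)) = n ((w : C)) - n (((ρ (e (ι w)) : ↥W) : C)) := by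
    intro e he w
    have h6 := he (ι w)
    rw [hι] at h6
    rw [hdecC (e (ι w)), hnsplit _ _ (hpC₀ _ (hWC₀ (ρ (e (ι w))).2))] at h6
    exact eq_sub_of_add_eq h6
  -- the forward map, characterized by `f φ w = ρ (φ (ι w))`
  have exi : ∀ φ : {φ : ↥C₀ ≃ₗ[F] ↥C₀ // ∀ x : ↥C₀, n ((φ x : C)) = n ((x : C))},
      ∃ σ : {σ : ↥W ≃ₗ[F] ↥W //
          ∀ w w' : ↥W, polar (⇑n) ((σ w : C)) ((σ w' : C)) = polar (⇑n) (w : C) (w' : C)},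
        ∀ w : ↥W, σ.1 w = ρ (φ.1 (ι w)) := by
    intro φ
    have hf1 : φ.1 one₀ = one₀ := hfix φ.1 φ.2
    have hf2 : φ.1.symm one₀ = one₀ := φ.1.symm_apply_eq.mpr hf1.symm
    have expand : ∀ (x y : ↥C₀) (c c' : F),
        polar (⇑n) ((x : C) - c • 1) ((y : C) - c' • 1) = polar (⇑n) (x : C) (y : C) := by
      intro x y c c'
      simp [polar_sub_left, polar_sub_right, polar_smul_left, polar_smul_right,
        hpC₀ _ x.2, hp1 _ y.2, h11]
    refine ⟨⟨LinearEquiv.ofLinear (ρ ∘ₗ (φ.1 : ↥C₀ →ₗ[F] ↥C₀) ∘ₗ ι)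
      (ρ ∘ₗ (φ.1.symm : ↥C₀ →ₗ[F] ↥C₀) ∘ₗ ι) ?_ ?_, ?_⟩, ?_⟩
    · apply LinearMap.ext
      intro w
      simp only [LinearMap.comp_apply, LinearMap.id_apply, LinearEquiv.coe_coe]
      rw [herase φ.1 hf1, φ.1.apply_symm_apply, hρι]
    · apply LinearMap.ext
      intro w
      simp only [LinearMap.comp_apply, LinearMap.id_apply, LinearEquiv.coe_coe]
      rw [herase φ.1.symm hf2, φ.1.symm_apply_apply, hρι]
    · intro w w'
      simp only [LinearEquiv.ofLinear_apply, LinearMap.comp_apply, LinearEquiv.coe_coe]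
      rw [hρ, hρ, hπ, hπ, expand, hOpol φ.1 φ.2, hι, hι]
    · intro w
      simp only [LinearEquiv.ofLinear_apply, LinearMap.comp_apply, LinearEquiv.coe_coe]
  choose f hf using exi
  refine ⟨f, ⟨?_, ?_⟩, ?_, ?_⟩
  · -- injectivity
    intro φ ψ h
    have hw : ∀ w : ↥W, φ.1 (ι w) = ψ.1 (ι w) := by
      intro w
      have h1' := hf φ w
      rw [h] at h1'
      have hρeq : ρ (φ.1 (ι w)) = ρ (ψ.1 (ι w)) := h1'.symm.trans (hf ψ w)
      have hπφ := hπval φ.1 φ.2 w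
      have hπψ := hπval ψ.1 ψ.2 w
      rw [hρeq] at hπφ
      have hπeq : π (φ.1 (ι w)) = π (ψ.1 (ι w)) := hsqr _ _ (hπφ.trans hπψ.symm)
      rw [hdec (φ.1 (ι w)), hdec (ψ.1 (ι w)), hπeq, hρeq]
    have hone : φ.1 one₀ = ψ.1 one₀ := (hfix φ.1 φ.2).trans (hfix ψ.1 ψ.2).symm
    apply Subtype.ext
    apply LinearEquiv.ext
    intro x
    rw [hdec x, _root_.map_add, _root_.map_add, _root_.map_smul, _root_.map_smul, hone,
      hw (ρ x)]
  · -- surjectivity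
    rintro ⟨σ, hσ⟩
    have hγ : ∀ (τ : ↥W ≃ₗ[F] ↥W),
        (∀ w w' : ↥W, polar (⇑n) ((τ w : C)) ((τ w' : C)) = polar (⇑n) (w : C) (w' : C)) →
        ∃ β : ↥W →ₗ[F] F, ∀ w : ↥W, β w * β w = n ((w : C)) - n ((τ w : C)) := by
      intro τ hτ
      set g : ↥W → F := fun w => sqrt (n ((w : C)) - n ((τ w : C))) with hgdef
      have hg : ∀ w : ↥W, g w * g w = n ((w : C)) - n ((τ w : C)) := fun w => hsqrt _
      have ga : ∀ w w' : ↥W, g (w + w') = g w + g w' := by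
        intro w w'
        apply hsqr
        rw [hg, hfrob, hg, hg, _root_.map_add, Submodule.coe_add, Submodule.coe_add,
          QuadraticMap.map_add (⇑n) ((w : C)) ((w' : C)),
          QuadraticMap.map_add (⇑n) ((τ w : C)) ((τ w' : C)), hτ w w']
        ring
      have gs : ∀ (c : F) (w : ↥W), g (c • w) = c • g w := by
        intro c w
        apply hsqr
        rw [hg, smul_eq_mul, _root_.map_smul, SetLike.val_smul, SetLike.val_smul,
          QuadraticMap.map_smul, QuadraticMap.map_smul, smul_eq_mul, smul_eq_mul]
        linear_combination (-(c * c)) * hg w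
      exact ⟨{ toFun := g, map_add' := ga, map_smul' := fun c w => by simpa using gs c w },
        hg⟩
    have hσ' : ∀ w w' : ↥W,
        polar (⇑n) ((σ.symm w : C)) ((σ.symm w' : C)) = polar (⇑n) (w : C) (w' : C) := by
      intro w w'
      have h9 := hσ (σ.symm w) (σ.symm w')
      rw [σ.apply_symm_apply, σ.apply_symm_apply] at h9
      exact h9.symm
    obtain ⟨α, hα⟩ := hγ σ hσ
    obtain ⟨α', hα'⟩ := hγ σ.symm hσ'
    have hαα' : ∀ w : ↥W, α' (σ w) = α w := by
      intro w
      apply hsqr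
      rw [hα', hα, σ.symm_apply_apply, hswap]
    have hα'α : ∀ w : ↥W, α (σ.symm w) = α' w := by
      intro w
      apply hsqr
      rw [hα, hα', σ.apply_symm_apply, hswap]
    let Φ : ↥C₀ →ₗ[F] ↥C₀ :=
      LinearMap.toSpanSingleton F ↥C₀ one₀ ∘ₗ (π + α ∘ₗ ρ) ∘ₗ LinearMap.id
        + ι ∘ₗ (σ : ↥W →ₗ[F] ↥W) ∘ₗ ρ
    let Φ' : ↥C₀ →ₗ[F] ↥C₀ :=
      LinearMap.toSpanSingleton F ↥C₀ one₀ ∘ₗ (π + α' ∘ₗ ρ) ∘ₗ LinearMap.id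
        + ι ∘ₗ (σ.symm : ↥W →ₗ[F] ↥W) ∘ₗ ρ
    have hΦ : ∀ x : ↥C₀, Φ x = (π x + α (ρ x)) • one₀ + ι (σ (ρ x)) := fun _ => rfl
    have hΦ' : ∀ x : ↥C₀, Φ' x = (π x + α' (ρ x)) • one₀ + ι (σ.symm (ρ x)) := fun _ => rfl
    have hπgen : ∀ (c : F) (v : ↥W), π (c • one₀ + ι v) = c := by
      intro c v
      rw [_root_.map_add, _root_.map_smul, hπ1, hπι, smul_eq_mul, mul_one, add_zero]
    have hρgen : ∀ (c : F) (v : ↥W), ρ (c • one₀ + ι v) = v := by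
      intro c v
      rw [_root_.map_add, _root_.map_smul, hρ1, smul_zero, zero_add, hρι]
    have hinv1 : Φ' ∘ₗ Φ = LinearMap.id := by
      apply LinearMap.ext
      intro x
      rw [LinearMap.comp_apply, LinearMap.id_apply, hΦ x, hΦ' _, hπgen, hρgen, hαα',
        σ.symm_apply_apply]
      have h10 : π x + α (ρ x) + α (ρ x) = π x := by rw [add_assoc, hcc, add_zero]
      rw [h10]
      exact (hdec x).symm
    have hinv2 : Φ ∘ₗ Φ' = LinearMap.id := by
      apply LinearMap.ext
      intro x
      rw [LinearMap.comp_apply, LinearMap.id_apply, hΦ' x, hΦ _, hπgen, hρgen, hα'α,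
        σ.apply_symm_apply]
      have h10 : π x + α' (ρ x) + α' (ρ x) = π x := by rw [add_assoc, hcc, add_zero]
      rw [h10]
      exact (hdec x).symm
    let e : ↥C₀ ≃ₗ[F] ↥C₀ := LinearEquiv.ofLinear Φ Φ' hinv2 hinv1
    have hecoe : ∀ x : ↥C₀, e x = Φ x := fun _ => rfl
    have hco : ∀ (c : F) (v : ↥W), ((c • one₀ + ι v : ↥C₀) : C) = c • (1 : C) + (v : C) := by
      intro c v
      rw [Submodule.coe_add, SetLike.val_smul, hι]
    have hnorm : ∀ x : ↥C₀, n ((e x : C)) = n ((x : C)) := by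
      intro x
      rw [hecoe x, hΦ x, hco, hnsplit _ _ (hpC₀ _ (hWC₀ (σ (ρ x)).2)), hfrob, hα,
        hdecC x, hnsplit _ _ (hpC₀ _ (hWC₀ (ρ x).2))]
      ring
    refine ⟨⟨e, hnorm⟩, ?_⟩
    apply Subtype.ext
    apply LinearEquiv.ext
    intro w
    rw [hf ⟨e, hnorm⟩ w]
    show ρ (e (ι w)) = σ w
    rw [hecoe, hΦ, hρgen, hρι]
  · -- compatibility with the decomposition
    intro φ w
    refine ⟨π (φ.1 (ι w)), ?_⟩
    rw [hf φ w]
    exact hdecC (φ.1 (ι w))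
  · -- compatibility with composition
    intro φ ψ χ hχ
    apply LinearEquiv.ext
    intro w
    rw [hf χ, hχ, LinearEquiv.trans_apply, LinearEquiv.trans_apply, hf ψ, hf φ,
      herase ψ.1 (hfix ψ.1 ψ.2)]
end

section
/- Let C be a Cayley algebra over a field F of characteristic 2 with norm n, a ∈ C with n(a,1) = 1, and W = (F·1 + F·a)^⊥. An isometry φ ∈ O(C₀,n), written φ(w) = n(w_σ, w)·1 + σ(w) on W with σ ∈ Sp(W) and w_σ ∈ W, extends to an element of O(C,n) fixing 1 if and only if n(w_σ) ∈ {μ + μ² : μ ∈ F}. In particular, the restriction homomorphism Φ : {φ ∈ O(C,n) : φ(1)=1} → O(C₀,n) is surjective when F is algebraically closed. -/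
/-!
The line `F·1` is the radical of `C₀ = 1^⊥` (in characteristic 2, `1 ∈ C₀`), so every isometry
`φ` of `C₀` fixes `1`. Since `C = C₀ ⊕ F a`, the extensions of `φ` are exactly the maps
`x ↦ φ(x - n(x,1) a) + n(x,1) b`, and such a map is an isometry fixing `1` iff `n(b,1) = 1`,
`n(b) = n(a)` and `n(φ c, b) = n(c, a)` for `c ∈ C₀`. Writing out `φ` on `C₀ = F·1 ⊕ W`, the last
condition says `n(σ w, b) = n(w_σ, w)` on `W`, which by nondegeneracy forces
`b = λ·1 + a + σ(w_σ)`; then `n(b) = λ² + λ + n(a) + n(w_σ)`, so `n(b) = n(a)` iff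
`n(w_σ) = λ + λ²`. Over an algebraically closed field `μ² + μ = n(w_σ)` always has a root.
-/

open QuadraticMap

namespace QuadraticMap

variable {R M : Type*} [CommRing R] [AddCommGroup M] [Module R M]

section Hyperplane

variable {ℓ : M →ₗ[R] R} {H : Submodule R M} {a b : M} (hH : ∀ x, x ∈ H ↔ ℓ x = 0)

def hyperplaneProj (ha : ℓ a = 1) : M →ₗ[R] H :=
  LinearMap.codRestrict H (LinearMap.id - ℓ.smulRight a) fun x => by simp [hH, ha]

@[simp]
theorem coe_hyperplaneProj (ha : ℓ a = 1) (x : M) :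
    (hyperplaneProj hH ha x : M) = x - ℓ x • a :=
  rfl

theorem hyperplaneProj_add_smul (ha : ℓ a = 1) (h : H) (t : R) :
    hyperplaneProj hH ha (h + t • a) = h := by
  ext
  simp [(hH h).1 h.2, ha]

def hyperplaneExtend (ha : ℓ a = 1) (φ : H →ₗ[R] H) (b : M) : M →ₗ[R] M :=
  H.subtype ∘ₗ φ ∘ₗ hyperplaneProj hH ha + ℓ.smulRight b

theorem hyperplaneExtend_apply (ha : ℓ a = 1) (φ : H →ₗ[R] H) (x : M) :
    hyperplaneExtend hH ha φ b x = φ (hyperplaneProj hH ha x) + ℓ x • b :=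
  rfl

theorem hyperplaneExtend_coe (ha : ℓ a = 1) (φ : H →ₗ[R] H) (h : H) :
    hyperplaneExtend hH ha φ b h = φ h := by
  have hproj : hyperplaneProj hH ha h = h := by ext; simp [(hH h).1 h.2]
  rw [hyperplaneExtend_apply, hproj, (hH h).1 h.2, zero_smul, add_zero]

theorem hyperplaneExtend_symm_hyperplaneExtend (ha : ℓ a = 1) (hb : ℓ b = 1) (φ : H ≃ₗ[R] H)
    (x : M) : hyperplaneExtend hH hb φ.symm.toLinearMap a
      (hyperplaneExtend hH ha φ.toLinearMap b x) = x := by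
  have hℓx : ℓ (hyperplaneExtend hH ha φ.toLinearMap b x) = ℓ x := by
    rw [hyperplaneExtend_apply, map_add, map_smul, (hH _).1 (Submodule.coe_mem _), hb,
      smul_eq_mul, mul_one, zero_add]
  rw [hyperplaneExtend_apply _ hb, hℓx, hyperplaneExtend_apply, hyperplaneProj_add_smul hH hb]
  simp

def hyperplaneExtendEquiv (ha : ℓ a = 1) (hb : ℓ b = 1) (φ : H ≃ₗ[R] H) : M ≃ₗ[R] M :=
  .ofLinearMap (hyperplaneExtend hH ha φ b) (hyperplaneExtend hH hb φ.symm a)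
    (LinearMap.ext fun x => by
      simpa using hyperplaneExtend_symm_hyperplaneExtend hH hb ha φ.symm x)
    (LinearMap.ext (hyperplaneExtend_symm_hyperplaneExtend hH ha hb φ))

theorem map_hyperplaneExtend (Q : QuadraticMap R M R) (ha : ℓ a = 1) (φ : H →ₗ[R] H)
    (hφ : ∀ h : H, Q (φ h) = Q h) (hQb : Q b = Q a)
    (hpolar : ∀ h : H, polar Q (φ h) b = polar Q h a) (x : M) :
    Q (hyperplaneExtend hH ha φ b x) = Q x := by
  set p := hyperplaneProj hH ha x
  have hx : p + ℓ x • a = x := by simp [p]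
  calc Q (hyperplaneExtend hH ha φ b x) = Q (φ p + ℓ x • b) := rfl
    _ = Q p + ℓ x * ℓ x * Q a + ℓ x * polar Q p a := by
      rw [QuadraticMap.map_add Q, hφ, QuadraticMap.map_smul, hQb, polar_smul_right, hpolar,
        smul_eq_mul, smul_eq_mul]
    _ = Q (p + ℓ x • a) := by
      rw [QuadraticMap.map_add Q, QuadraticMap.map_smul, polar_smul_right, smul_eq_mul,
        smul_eq_mul]
    _ = Q x := by rw [hx]

end Hyperplane

theorem exists_isometry_extension_iff (Q : QuadraticMap R M R) {e a : M} {H : Submodule R M}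
    (hH : ∀ x, x ∈ H ↔ polar Q x e = 0) (ha : polar Q a e = 1) (he : e ∈ H)
    (φ : H ≃ₗ[R] H) (hφ : ∀ h : H, Q (φ h) = Q h) (hφe : (φ ⟨e, he⟩ : M) = e) :
    (∃ Φ : M ≃ₗ[R] M, (∀ x, Q (Φ x) = Q x) ∧ Φ e = e ∧ ∀ h : H, Φ h = φ h) ↔
      ∃ b, polar Q b e = 1 ∧ Q b = Q a ∧ ∀ h : H, polar Q (φ h) b = polar Q h a := by
  constructor
  · rintro ⟨Φ, hΦ, hΦe, hΦφ⟩
    have hpolar (x y : M) : polar Q (Φ x) (Φ y) = polar Q x y := by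
      simp only [polar, ← map_add, hΦ]
    exact ⟨Φ a, by rw [← hΦe, hpolar, ha], hΦ a, fun h => by rw [← hΦφ, hpolar]⟩
  · rintro ⟨b, hb, hQb, hφb⟩
    let ℓ := (polarBilin Q).flip e
    have hHℓ : ∀ x, x ∈ H ↔ ℓ x = 0 := hH
    have hℓa : ℓ a = 1 := ha
    have hℓb : ℓ b = 1 := hb
    refine ⟨hyperplaneExtendEquiv hHℓ hℓa hℓb φ,
      map_hyperplaneExtend hHℓ Q hℓa φ.toLinearMap hφ hQb hφb,
      (hyperplaneExtend_coe hHℓ hℓa φ.toLinearMap ⟨e, he⟩).trans hφe,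
      hyperplaneExtend_coe hHℓ hℓa φ.toLinearMap⟩

theorem eq_zero_of_forall_polar_hyperplane_eq_zero {Q : QuadraticMap R M R} {e a : M}
    {H : Submodule R M} (hnd : ∀ x, (∀ y, polar Q x y = 0) → x = 0)
    (hH : ∀ x, x ∈ H ↔ polar Q x e = 0) (ha : polar Q a e = 1) {z : M}
    (hzH : ∀ h ∈ H, polar Q z h = 0) (hza : polar Q z a = 0) : z = 0 :=
  hnd z fun y => by
    have hy : y - polar Q y e • a ∈ H := by
      rw [hH, polar_sub_left, polar_smul_left, ha, smul_eq_mul, mul_one, sub_self]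
    simpa [hza] using hzH _ hy

theorem map_smul_add_add (Q : QuadraticMap R M R) {e a u : M} (hQe : Q e = 1)
    (ha : polar Q a e = 1) (hue : polar Q u e = 0) (hua : polar Q u a = 0) (μ : R) :
    Q (μ • e + a + u) = μ ^ 2 + μ + Q a + Q u := by
  rw [QuadraticMap.map_add Q, QuadraticMap.map_add Q, QuadraticMap.map_smul, hQe, polar_add_left,
    polar_smul_left, polar_smul_left, polar_comm Q e a, ha, polar_comm Q e u, hue,
    polar_comm Q a u, hua]
  simp only [smul_eq_mul]
  ring

theorem map_one_eq_one_of_map_mul [NoZeroDivisors R] {A : Type*} [NonAssocRing A] [Module R A]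
    {Q : QuadraticMap R A R} (hmul : ∀ x y, Q (x * y) = Q x * Q y) (hQ : Q ≠ 0) : Q 1 = 1 := by
  have hQ1 : Q 1 ≠ 0 := fun h => hQ <| QuadraticMap.ext fun x => by
    rw [← mul_one x, hmul, h, mul_zero, zero_apply]
  simpa [hQ1] using hmul 1 1

section CharTwo

variable [CharP R 2] {Q : QuadraticMap R M R} {e a : M}

theorem polar_self_eq_zero (x : M) : polar Q x x = 0 := by
  rw [polar_self, CharTwo.two_nsmul]

theorem eq_zero_of_mem_of_forall_polar_eq_zero {W : Submodule R M}
    (hnd : ∀ x, (∀ y, polar Q x y = 0) → x = 0)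
    (hW : ∀ x, x ∈ W ↔ polar Q x e = 0 ∧ polar Q x a = 0) (ha : polar Q a e = 1) {v : M}
    (hv : v ∈ W) (hvW : ∀ w ∈ W, polar Q v w = 0) : v = 0 :=
  hnd v fun y => by
    have hy : y - polar Q y e • a - polar Q y a • e ∈ W := by
      rw [hW]
      simp [ha, polar_comm Q e a, CharTwo.two_eq_zero]
    obtain ⟨hve, hva⟩ := (hW v).1 hv
    simpa [hve, hva] using hvW _ hy

theorem hyperplane_isometry_apply_self [IsDomain R] {H : Submodule R M}
    (hnd : ∀ x, (∀ y, polar Q x y = 0) → x = 0) (hH : ∀ x, x ∈ H ↔ polar Q x e = 0)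
    (ha : polar Q a e = 1) (he : e ∈ H) (hQe : Q e ≠ 0) (φ : H ≃ₗ[R] H)
    (hφ : ∀ h : H, Q (φ h) = Q h) : (φ ⟨e, he⟩ : M) = e := by
  set s := polar Q (φ ⟨e, he⟩) a
  have hpolar (x y : H) : polar Q (φ x) (φ y) = polar Q x y := by
    simp only [polar, ← Submodule.coe_add, ← map_add, hφ]
  have hs : (φ ⟨e, he⟩ : M) = s • e := by
    rw [← sub_eq_zero]
    refine eq_zero_of_forall_polar_hyperplane_eq_zero hnd hH ha (fun h hh => ?_) ?_
    · obtain ⟨g, hg⟩ := φ.surjective ⟨h, hh⟩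
      have hg' : (φ g : M) = h := congrArg Subtype.val hg
      rw [polar_sub_left, polar_smul_left, ← hg', hpolar, polar_comm Q e, polar_comm Q e,
        (hH _).1 g.2, (hH _).1 (φ g).2, smul_zero, sub_zero]
    · rw [polar_sub_left, polar_smul_left, polar_comm Q e a, ha, smul_eq_mul, mul_one, sub_self]
  have hs1 : s = 1 := by
    have h := hφ ⟨e, he⟩
    rw [hs, QuadraticMap.map_smul, smul_eq_mul, mul_left_eq_self₀] at h
    exact CharTwo.sq_inj.1 (by rw [one_pow, pow_two]; exact h.resolve_right hQe)
  rw [hs, hs1, one_smul]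

theorem forall_polar_apply_eq_iff {C₀ W : Submodule R M}
    (hC₀ : ∀ x, x ∈ C₀ ↔ polar Q x e = 0)
    (hW : ∀ x, x ∈ W ↔ polar Q x e = 0 ∧ polar Q x a = 0) (hWC₀ : W ≤ C₀)
    (ha : polar Q a e = 1) (he : e ∈ C₀) {φ : C₀ ≃ₗ[R] C₀} (hφe : (φ ⟨e, he⟩ : M) = e)
    {σ : W → W} {wσ : W}
    (hdecomp : ∀ w : W, (φ ⟨w, hWC₀ w.2⟩ : M) = polar Q wσ w • e + σ w)
    {b : M} (hb : polar Q b e = 1) :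
    (∀ h : C₀, polar Q (φ h) b = polar Q h a) ↔ ∀ w : W, polar Q (σ w) b = polar Q wσ w := by
  have hφw (w : W) : polar Q (φ ⟨w, hWC₀ w.2⟩) b = polar Q wσ w + polar Q (σ w) b := by
    rw [hdecomp, polar_add_left, polar_smul_left, polar_comm Q e b, hb, smul_eq_mul, mul_one]
  constructor
  · intro hφb w
    have h := hφb ⟨w, hWC₀ w.2⟩
    rw [hφw, ((hW w).1 w.2).2] at h
    exact (CharTwo.add_eq_zero.1 h).symm
  · intro hσb h
    set s := polar Q h a
    have hw : (h : M) - s • e ∈ W := by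
      rw [hW, polar_sub_left, polar_sub_left, polar_smul_left, polar_smul_left,
        polar_self_eq_zero, (hC₀ h).1 h.2, polar_comm Q e a, ha]
      simp [s]
    let w : W := ⟨_, hw⟩
    have hh : h = s • ⟨e, he⟩ + ⟨w, hWC₀ w.2⟩ := by ext; simp [w]
    calc polar Q (φ h) b = s + (polar Q wσ w + polar Q (σ w) b) := by
          rw [hh, map_add, map_smul, Submodule.coe_add, Submodule.coe_smul, hφe, polar_add_left,
            polar_smul_left, polar_comm Q e b, hb, smul_eq_mul, mul_one, hφw]
      _ = s := by rw [hσb, CharTwo.add_self_eq_zero, add_zero]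

theorem polar_eq_one_and_forall_polar_eq_iff {W : Submodule R M}
    (hnd : ∀ x, (∀ y, polar Q x y = 0) → x = 0)
    (hW : ∀ x, x ∈ W ↔ polar Q x e = 0 ∧ polar Q x a = 0) (ha : polar Q a e = 1)
    {σ : W ≃ₗ[R] W} (hσ : ∀ w w' : W, polar Q (σ w) (σ w') = polar Q w w') (wσ : W) (b : M) :
    (polar Q b e = 1 ∧ ∀ w : W, polar Q (σ w) b = polar Q wσ w) ↔
      ∃ μ : R, b = μ • e + a + σ wσ := by
  have hWe (w : W) : polar Q e w = 0 := by rw [polar_comm]; exact ((hW w).1 w.2).1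
  have hWa (w : W) : polar Q a w = 0 := by rw [polar_comm]; exact ((hW w).1 w.2).2
  constructor
  · rintro ⟨hb, hσb⟩
    refine ⟨polar Q b a, sub_eq_zero.1 <| eq_zero_of_mem_of_forall_polar_eq_zero hnd hW ha ?_ ?_⟩
    · rw [hW]
      simp [CharTwo.two_eq_zero, hb, ha, polar_comm Q e a, ((hW _).1 (σ wσ).2).1,
        ((hW _).1 (σ wσ).2).2]
    · intro w hw
      obtain ⟨w', rfl⟩ : ∃ w', (σ w' : M) = w := ⟨σ.symm ⟨w, hw⟩, by simp⟩
      rw [polar_sub_left, polar_comm Q b, hσb]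
      simp [hWe, hWa, hσ]
  · rintro ⟨μ, rfl⟩
    refine ⟨?_, fun w => ?_⟩
    · simp [CharTwo.two_eq_zero, ha, ((hW _).1 (σ wσ).2).1]
    · simp [polar_comm Q (σ w : M), hWe, hWa, hσ, polar_comm Q wσ]

end CharTwo

end QuadraticMap

theorem IsAlgClosed.exists_eq_add_sq {k : Type*} [Field k] [IsAlgClosed k] (c : k) :
    ∃ μ : k, c = μ + μ ^ 2 := by
  open Polynomial in
  obtain ⟨μ, hμ⟩ := IsAlgClosed.exists_root (X ^ 2 + X - C c) (by
    rw [show (X ^ 2 + X - C c : k[X]).degree = 2 by compute_degree!]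
    exact two_ne_zero)
  exact ⟨μ, by simp at hμ; linear_combination -hμ⟩

theorem cayley_char_two_extension_criterion_general {F : Type*} [Field F] {C : Type*}
    [NonAssocRing C] [Module F C]
    (n : QuadraticForm F C)
    (hcomp : ∀ x y : C, n (x * y) = n x * n y)
    (hnd : ∀ x : C, (∀ y : C, polar (⇑n) x y = 0) → x = 0)
    (hchar : (2 : F) = 0)
    (a : C) (ha : polar (⇑n) a 1 = 1)
    (C₀ : Submodule F C) (hC₀ : ∀ x : C, x ∈ C₀ ↔ polar (⇑n) x 1 = 0)
    (W : Submodule F C)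
    (hW : ∀ x : C, x ∈ W ↔ (polar (⇑n) x 1 = 0 ∧ polar (⇑n) x a = 0))
    (hWC₀ : W ≤ C₀)
    (φ : ↥C₀ ≃ₗ[F] ↥C₀) (hφn : ∀ x : ↥C₀, n ((φ x : C)) = n ((x : C)))
    (σ : ↥W ≃ₗ[F] ↥W)
    (hσ : ∀ w w' : ↥W, polar (⇑n) ((σ w : C)) ((σ w' : C)) = polar (⇑n) (w : C) (w' : C))
    (wσ : ↥W)
    (hdecomp : ∀ w : ↥W,
      ((φ ⟨(w : C), hWC₀ w.2⟩ : C)) = polar (⇑n) (wσ : C) (w : C) • (1 : C) + (σ w : C))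
    (hwσ : ∀ w : ↥W, n ((w : C)) - n ((σ w : C)) = (polar (⇑n) (wσ : C) (w : C)) ^ 2) :
    ((∃ Φ : C ≃ₗ[F] C, (∀ x : C, n (Φ x) = n x) ∧ Φ 1 = 1 ∧
        ∀ x : ↥C₀, Φ (x : C) = ((φ x : C))) ↔
      (∃ μ : F, n ((wσ : C)) = μ + μ ^ 2)) ∧
    (IsAlgClosed F → ∃ Φ : C ≃ₗ[F] C, (∀ x : C, n (Φ x) = n x) ∧ Φ 1 = 1 ∧
        ∀ x : ↥C₀, Φ (x : C) = ((φ x : C))) := by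
  have : CharP F 2 := CharTwo.of_one_ne_zero_of_two_eq_zero one_ne_zero hchar
  have hn1 : n 1 = 1 := map_one_eq_one_of_map_mul hcomp fun h => by simp [h, polar] at ha
  have h1 : (1 : C) ∈ C₀ := (hC₀ 1).2 (polar_self_eq_zero 1)
  have hφ1 := hyperplane_isometry_apply_self hnd hC₀ ha h1 (by simp [hn1]) φ hφn
  have hnσ : n (σ wσ) = n wσ := by
    have h := hwσ wσ
    rw [polar_self_eq_zero, zero_pow two_ne_zero, sub_eq_zero] at h
    exact h.symm
  have hσW := (hW _).1 (σ wσ).2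
  have hcrit (μ : F) : n (μ • 1 + a + σ wσ) = n a ↔ n wσ = μ + μ ^ 2 := by
    rw [map_smul_add_add n hn1 ha hσW.1 hσW.2, hnσ]
    constructor <;> intro h
    · linear_combination h - (μ + μ ^ 2) * hchar
    · linear_combination h + (μ + μ ^ 2) * hchar
  have hext : (∃ Φ : C ≃ₗ[F] C, (∀ x : C, n (Φ x) = n x) ∧ Φ 1 = 1 ∧
      ∀ x : ↥C₀, Φ (x : C) = ((φ x : C))) ↔ ∃ μ : F, n wσ = μ + μ ^ 2 := by
    rw [exists_isometry_extension_iff n hC₀ ha h1 φ hφn hφ1]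
    constructor
    · rintro ⟨b, hb, hnb, hφb⟩
      obtain ⟨μ, rfl⟩ := (polar_eq_one_and_forall_polar_eq_iff hnd hW ha hσ wσ b).1
        ⟨hb, (forall_polar_apply_eq_iff hC₀ hW hWC₀ ha h1 hφ1 hdecomp hb).1 hφb⟩
      exact ⟨μ, (hcrit μ).1 hnb⟩
    · rintro ⟨μ, hμ⟩
      obtain ⟨hb, hσb⟩ := (polar_eq_one_and_forall_polar_eq_iff hnd hW ha hσ wσ _).2 ⟨μ, rfl⟩
      exact ⟨_, hb, (hcrit μ).2 hμ,
        (forall_polar_apply_eq_iff hC₀ hW hWC₀ ha h1 hφ1 hdecomp hb).2 hσb⟩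
  exact ⟨hext, fun _ => hext.2 (IsAlgClosed.exists_eq_add_sq _)⟩

/-- Characteristic 2: an isometry `φ` of `C₀`, written on `W` as
`φ(w) = n(w_σ,w)·1 + σ(w)` with `σ ∈ Sp(W)` and `w_σ ∈ W`, extends to an element of
`O(C,n)` fixing `1` iff `n(w_σ) ∈ {μ + μ² : μ ∈ F}`. In particular the restriction map
`Φ : {φ ∈ O(C,n) : φ(1)=1} → O(C₀,n)` is surjective when `F` is algebraically closed. -/
theorem cayley_char_two_extension_criterion {F : Type*} [Field F] {C : Type*}
    [NonAssocRing C] [Module F C] [SMulCommClass F C C] [IsScalarTower F C C]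
    (n : QuadraticForm F C)
    (hdim : Module.finrank F C = 8)
    (hcomp : ∀ x y : C, n (x * y) = n x * n y)
    (hnd : ∀ x : C, (∀ y : C, polar (⇑n) x y = 0) → x = 0)
    (halt : ∀ x y : C, x * (x * y) = (x * x) * y ∧ (x * y) * y = x * (y * y))
    (hchar : (2 : F) = 0)
    (a : C) (ha : polar (⇑n) a 1 = 1)
    (C₀ : Submodule F C) (hC₀ : ∀ x : C, x ∈ C₀ ↔ polar (⇑n) x 1 = 0)
    (W : Submodule F C)
    (hW : ∀ x : C, x ∈ W ↔ (polar (⇑n) x 1 = 0 ∧ polar (⇑n) x a = 0))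
    (hWC₀ : W ≤ C₀) (h1 : (1 : C) ∈ C₀)
    (φ : ↥C₀ ≃ₗ[F] ↥C₀) (hφn : ∀ x : ↥C₀, n ((φ x : C)) = n ((x : C)))
    (σ : ↥W ≃ₗ[F] ↥W)
    (hσ : ∀ w w' : ↥W, polar (⇑n) ((σ w : C)) ((σ w' : C)) = polar (⇑n) (w : C) (w' : C))
    (wσ : ↥W)
    (hdecomp : ∀ w : ↥W,
      ((φ ⟨(w : C), hWC₀ w.2⟩ : C)) = polar (⇑n) (wσ : C) (w : C) • (1 : C) + (σ w : C))
    (hwσ : ∀ w : ↥W, n ((w : C)) - n ((σ w : C)) = (polar (⇑n) (wσ : C) (w : C)) ^ 2) :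
    ((∃ Φ : C ≃ₗ[F] C, (∀ x : C, n (Φ x) = n x) ∧ Φ 1 = 1 ∧
        ∀ x : ↥C₀, Φ (x : C) = ((φ x : C))) ↔
      (∃ μ : F, n ((wσ : C)) = μ + μ ^ 2)) ∧
    (IsAlgClosed F → ∃ Φ : C ≃ₗ[F] C, (∀ x : C, n (Φ x) = n x) ∧ Φ 1 = 1 ∧
        ∀ x : ↥C₀, Φ (x : C) = ((φ x : C))) :=
  cayley_char_two_extension_criterion_general n hcomp hnd hchar a ha C₀ hC₀ W hW hWC₀ φ hφn σ hσ wσ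
    hdecomp hwσ
end

section
/- Let C be a Cayley algebra over a field F with norm n, and let φ : C → C be a 2-local automorphism (not assumed linear). Then n(φ(x)) = n(x) and n(φ(x), φ(y)) = n(x,y) for all x, y ∈ C, and φ is a linear map. -/
open QuadraticMap

/-- **Lemma `le:2local_linear`.** Any 2-local automorphism `φ` of a Cayley
algebra preserves the norm and the polar form, and is linear. -/
theorem cayley_two_local_aut_linear {F : Type*} [Field F] {C : Type*} [NonAssocRing C]
    [Module F C] [SMulCommClass F C C] [IsScalarTower F C C]
    (n : QuadraticForm F C)
    (hdim : Module.finrank F C = 8)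
    (hcomp : ∀ x y : C, n (x * y) = n x * n y)
    (hnd : ∀ x : C, (∀ y : C, polar (⇑n) x y = 0) → x = 0)
    (halt : ∀ x y : C, x * (x * y) = (x * x) * y ∧ (x * y) * y = x * (y * y))
    (φ : C → C)
    (h2loc : ∀ x y : C, ∃ ψ : C →ₗ[F] C,
      (Function.Bijective ψ ∧ ∀ a b : C, ψ (a * b) = ψ a * ψ b) ∧
      φ x = ψ x ∧ φ y = ψ y) :
    (∀ x : C, n (φ x) = n x) ∧
    (∀ x y : C, polar (⇑n) (φ x) (φ y) = polar (⇑n) x y) ∧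
    IsLinearMap F φ := by
  have hpos : 0 < Module.finrank F C := by rw [hdim]; norm_num
  have : Nontrivial C := Module.nontrivial_of_finrank_pos hpos
  have : Module.Finite F C := Module.finite_of_finrank_pos hpos
  -- linearization of the composition law in the left slot
  have L1 : ∀ x y z : C, polar (⇑n) (x * y) (x * z) = n x * polar (⇑n) y z := by
    intro x y z
    simp only [polar]
    rw [← mul_add x y z, hcomp, hcomp, hcomp]
    ring
  -- full linearization
  have L2 : ∀ x w y z : C, polar (⇑n) (x * y) (w * z) + polar (⇑n) (w * y) (x * z)
      = polar (⇑n) x w * polar (⇑n) y z := by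
    intro x w y z
    have h1 := L1 (x + w) y z
    rw [add_mul, add_mul, polar_add_left, polar_add_right, polar_add_right] at h1
    have hnxw : n (x + w) = polar (⇑n) x w + n x + n w := by simp only [polar]; ring
    rw [hnxw] at h1
    have h2 := L1 x y z
    have h3 := L1 w y z
    linear_combination h1 - h2 - h3
  -- the generic quadratic relation x² = B x 1 • x - n x • 1
  have L3 : ∀ x : C, x * x = polar (⇑n) x 1 • x - n x • (1 : C) := by
    intro x
    have key : ∀ y : C, polar (⇑n) (x * x) y
        = polar (⇑n) x 1 * polar (⇑n) x y - n x * polar (⇑n) 1 y := by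
      intro y
      have h1 := L2 x 1 x y
      rw [one_mul, one_mul] at h1
      have h2 := L1 x 1 y
      rw [mul_one] at h2
      linear_combination h1 - h2
    have h0 : ∀ y : C, polar (⇑n) (x * x - (polar (⇑n) x 1 • x - n x • (1 : C))) y = 0 := by
      intro y
      rw [polar_sub_left, polar_sub_left, polar_smul_left, polar_smul_left, smul_eq_mul,
        smul_eq_mul, key y]
      ring
    have := hnd _ h0
    rwa [sub_eq_zero] at this
  -- automorphisms fix 1
  have L4 : ∀ ψ : C →ₗ[F] C, Function.Bijective ψ → (∀ a b : C, ψ (a * b) = ψ a * ψ b) →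
      ψ 1 = 1 := by
    intro ψ hbij hmul
    obtain ⟨u, hu⟩ := hbij.2 1
    have h := hmul 1 u
    rw [one_mul, hu, mul_one] at h
    exact h.symm
  -- automorphisms preserve the norm
  have L5 : ∀ ψ : C →ₗ[F] C, Function.Bijective ψ → (∀ a b : C, ψ (a * b) = ψ a * ψ b) →
      ∀ x : C, n (ψ x) = n x := by
    intro ψ hbij hmul x
    have h1 : ψ x * ψ x = polar (⇑n) x 1 • ψ x - n x • (1 : C) := by
      rw [← hmul, L3 x, _root_.map_sub, LinearMap.map_smul, LinearMap.map_smul, L4 ψ hbij hmul]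
    have h2 : ψ x * ψ x = polar (⇑n) (ψ x) 1 • ψ x - n (ψ x) • (1 : C) := L3 (ψ x)
    have h3 : (polar (⇑n) x 1 - polar (⇑n) (ψ x) 1) • ψ x
        = (n x - n (ψ x)) • (1 : C) := by
      rw [h1] at h2
      rw [sub_smul, sub_smul]
      linear_combination (norm := module) h2
    by_contra hne
    have hb : n x - n (ψ x) ≠ 0 := sub_ne_zero.mpr fun h => hne h.symm
    rcases eq_or_ne (polar (⇑n) x 1 - polar (⇑n) (ψ x) 1) 0 with ha | ha
    · rw [ha, zero_smul] at h3
      rcases smul_eq_zero.mp h3.symm with h | h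
      · exact hb h
      · exact one_ne_zero h
    · set t := (polar (⇑n) x 1 - polar (⇑n) (ψ x) 1)⁻¹ * (n x - n (ψ x)) with ht
      have hx : ψ x = t • (1 : C) := by
        rw [ht, mul_smul, ← h3, ← mul_smul, inv_mul_cancel₀ ha, one_smul]
      have hxx : x = t • (1 : C) := by
        apply hbij.1
        rw [LinearMap.map_smul, L4 ψ hbij hmul]
        exact hx
      have heq : ψ x = x := by rw [hx, ← hxx]
      rw [heq] at hb
      exact hb (sub_self _)
  -- φ preserves the norm
  have Pn : ∀ x : C, n (φ x) = n x := by
    intro x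
    obtain ⟨ψ, ⟨⟨hbij, hmul⟩, hx, -⟩⟩ := h2loc x x
    rw [hx]
    exact L5 ψ hbij hmul x
  -- φ preserves the polar form
  have PB : ∀ x y : C, polar (⇑n) (φ x) (φ y) = polar (⇑n) x y := by
    intro x y
    obtain ⟨ψ, ⟨⟨hbij, hmul⟩, hx, hy⟩⟩ := h2loc x y
    simp only [polar, hx, hy, ← map_add, L5 ψ hbij hmul]
  -- orthogonality to the range of φ implies zero
  have L6 : ∀ u : C, (∀ z : C, polar (⇑n) u (φ z) = 0) → u = 0 := by
    intro u hu
    set e := Module.finBasis F C with he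
    have hne : Nonempty (Fin (Module.finrank F C)) := ⟨⟨0, hpos⟩⟩
    have hind : LinearIndependent F (fun i => φ (e i)) := by
      rw [Fintype.linearIndependent_iff]
      intro c hc
      have h0 : (Finset.univ.sum fun i => c i • e i) = 0 := by
        apply hnd
        intro z
        have e1 : polar (⇑n) (Finset.univ.sum fun i => c i • e i) z
            = Finset.univ.sum fun i => c i • polar (⇑n) (e i) z := by
          simp only [← polarBilin_apply_apply, map_sum, LinearMap.sum_apply, LinearMap.map_smul,
            LinearMap.smul_apply]
        rw [e1]
        have e2 : ∀ i, polar (⇑n) (e i) z = polar (⇑n) (φ (e i)) (φ z) :=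
          fun i => (PB (e i) z).symm
        simp only [e2]
        have e3 : (Finset.univ.sum fun i => c i • polar (⇑n) (φ (e i)) (φ z))
            = polar (⇑n) (Finset.univ.sum fun i => c i • φ (e i)) (φ z) := by
          simp only [← polarBilin_apply_apply, map_sum, LinearMap.sum_apply, LinearMap.map_smul,
            LinearMap.smul_apply]
        rw [e3, hc]
        simp [polar]
      exact Fintype.linearIndependent_iff.mp e.linearIndependent c h0
    have hspan : Submodule.span F (Set.range fun i => φ (e i)) = ⊤ :=
      hind.span_eq_top_of_card_eq_finrank (by simp)
    apply hnd
    intro y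
    have hy : y ∈ Submodule.span F (Set.range fun i => φ (e i)) := by
      rw [hspan]; trivial
    have hker : Submodule.span F (Set.range fun i => φ (e i)) ≤
        LinearMap.ker (polarBilin n u) := by
      rw [Submodule.span_le]
      rintro - ⟨i, rfl⟩
      simp only [SetLike.mem_coe, LinearMap.mem_ker, polarBilin_apply_apply]
      exact hu (e i)
    have hm := hker hy
    rwa [LinearMap.mem_ker, polarBilin_apply_apply] at hm
  refine ⟨Pn, PB, ?_, ?_⟩
  · -- additivity
    intro x y
    have hd : φ (x + y) - (φ x + φ y) = 0 := by
      apply L6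
      intro z
      rw [polar_sub_left, polar_add_left, PB, PB, PB, polar_add_left]
      ring
    rwa [sub_eq_zero] at hd
  · -- homogeneity
    intro c x
    have hd : φ (c • x) - c • φ x = 0 := by
      apply L6
      intro z
      rw [polar_sub_left, polar_smul_left, PB, PB, polar_smul_left]
      ring
    rwa [sub_eq_zero] at hd
end

section
/- Let C be the split Cayley algebra over a field F. Then every 2-local automorphism of C is an automorphism: 2LocAut(C) = Aut(C). -/
/-!
An automorphism `ψ` preserves the norm: applying `ψ` to `x * x = t(x) • x - n(x) • 1` and comparing
with the same equation for `ψ x` gives `(t x - t (ψ x)) • ψ x = (n x - n (ψ x)) • 1`, and if the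
coefficient on the left is nonzero then `ψ x`, hence `x`, is a scalar fixed by `ψ`.
So a 2-local automorphism `φ` preserves the nondegenerate polar form, which in finite dimension
forces `φ` to be a linear bijection. As the norm is isotropic, `C` is spanned by isotropic vectors
and hence by idempotents. For an idempotent `e`, left alternativity makes left multiplication by
`φ e` a projection; comparing `φ` with automorphisms agreeing with it at `(e, e * y)` and at
`(e, y - e * y)` gives `φ (e * y) = φ e * φ y`, and linearity extends this to all of `C`.
-/

open QuadraticMap

namespace LinearMap.SeparatingLeft

variable {F V : Type*} [Field F] [AddCommGroup V] [Module F V] {B : LinearMap.BilinForm F V}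
  {f : V → V}

theorem linearIndependent_comp_basis_of_isometry (hB : B.SeparatingLeft)
    (hf : ∀ x y, B (f x) (f y) = B x y) {ι : Type*} [Fintype ι] (b : Module.Basis ι F V) :
    LinearIndependent F (f ∘ b) := by
  refine Fintype.linearIndependent_iff.mpr fun g hg => ?_
  have hsum : ∑ i, g i • b i = 0 := by
    refine hB _ fun y => LinearMap.congr_fun (b.ext (f₂ := 0) fun j => ?_) y
    calc B (∑ i, g i • b i) (b j) = ∑ i, g i * B (f (b i)) (f (b j)) := by simp [hf]
      _ = B (∑ i, g i • (f ∘ b) i) (f (b j)) := by simp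
      _ = 0 := by rw [hg, map_zero, LinearMap.zero_apply]
  exact Fintype.linearIndependent_iff.mp b.linearIndependent g hsum

theorem exists_linearEquiv_of_isometry [FiniteDimensional F V] (hB : B.SeparatingLeft)
    (hf : ∀ x y, B (f x) (f y) = B x y) : ∃ L : V ≃ₗ[F] V, ⇑L = f := by
  let b := Module.finBasis F V
  have hspan := (hB.linearIndependent_comp_basis_of_isometry hf b).span_eq_top_of_card_eq_finrank'
    (by simp)
  have horth : ∀ d, (∀ i, B d (f (b i)) = 0) → d = 0 := fun d hd =>
    hB d fun y => LinearMap.congr_fun (LinearMap.ext_on_range hspan (g := 0) hd) y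
  have hadd : ∀ x y, f (x + y) = f x + f y := fun x y => sub_eq_zero.mp <| horth _ fun i => by
    simp only [map_sub, map_add, LinearMap.sub_apply, LinearMap.add_apply, hf, sub_self]
  have hsmul : ∀ (c : F) x, f (c • x) = c • f x := fun c x => sub_eq_zero.mp <| horth _ fun i => by
    simp only [map_sub, map_smul, LinearMap.sub_apply, LinearMap.smul_apply, hf, sub_self]
  let L : V →ₗ[F] V := IsLinearMap.mk' f ⟨hadd, hsmul⟩
  have hinj : Function.Injective L := by
    refine (injective_iff_map_eq_zero L).mpr fun x hx => hB x fun y => ?_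
    rw [← hf, show f x = 0 from hx, map_zero, LinearMap.zero_apply]
  exact ⟨LinearEquiv.ofInjectiveEndo L hinj, rfl⟩

end LinearMap.SeparatingLeft

namespace QuadraticMap

variable {F V : Type*} [Field F] [AddCommGroup V] [Module F V] {Q : QuadraticForm F V}

theorem exists_isotropic_polar_eq_one (hQ : (polarBilin Q).SeparatingLeft) {z : V} (hz0 : z ≠ 0)
    (hz : Q z = 0) : ∃ w, Q w = 0 ∧ polar Q z w = 1 := by
  obtain ⟨w₀, hw₀⟩ : ∃ w, polar Q z w ≠ 0 := by
    by_contra! h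
    exact hz0 (hQ z h)
  obtain ⟨w, hzw⟩ : ∃ w, polar Q z w = 1 :=
    ⟨(polar Q z w₀)⁻¹ • w₀, by rw [polar_smul_right, smul_eq_mul, inv_mul_cancel₀ hw₀]⟩
  refine ⟨w - Q w • z, ?_, ?_⟩
  · rw [sub_eq_add_neg, QuadraticMap.map_add (⇑Q), QuadraticMap.map_neg, QuadraticMap.map_smul,
      polar_neg_right, polar_smul_right, polar_comm, hzw, hz]
    simp
  · rw [polar_sub_right, polar_smul_right, hzw, polar_self, hz]
    simp

theorem span_isotropic_eq_top (hQ : (polarBilin Q).SeparatingLeft) (hiso : ¬Q.Anisotropic) :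
    Submodule.span F {x | Q x = 0} = ⊤ := by
  obtain ⟨z₀, hz₀0, hz₀⟩ := (not_anisotropic_iff_exists Q).mp hiso
  obtain ⟨z₁, hz₁, hz₀z₁⟩ := exists_isotropic_polar_eq_one hQ hz₀0 hz₀
  refine Submodule.eq_top_iff'.mpr fun v => ?_
  -- `Q (v + α • z₀ + β • z₁)` is affine in `β` with slope `α + polar Q v z₁`.
  obtain ⟨α, hα⟩ : ∃ α : F, α + polar Q v z₁ ≠ 0 := by
    by_cases h : polar Q v z₁ = 0
    · exact ⟨1, by simp [h]⟩
    · exact ⟨0, by simpa using h⟩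
  set β := -(Q v + α * polar Q v z₀) / (α + polar Q v z₁)
  have hv : Q (v + α • z₀ + β • z₁) = 0 := by
    rw [QuadraticMap.map_add (⇑Q), QuadraticMap.map_add (⇑Q), QuadraticMap.map_smul,
      QuadraticMap.map_smul, polar_smul_right, polar_smul_right, polar_add_left, polar_smul_left,
      hz₀, hz₁, hz₀z₁]
    simp only [smul_eq_mul, β]
    field_simp
    ring
  have hmem : ∀ {x}, Q x = 0 → x ∈ Submodule.span F {x | Q x = 0} := fun h =>
    Submodule.subset_span h
  convert Submodule.sub_mem _ (Submodule.sub_mem _ (hmem hv) (Submodule.smul_mem _ α (hmem hz₀)))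
    (Submodule.smul_mem _ β (hmem hz₁)) using 1
  abel

end QuadraticMap

theorem map_one_of_surjective_of_map_mul {M N : Type*} [MulOneClass M] [MulOneClass N]
    {f : M → N} (hs : Function.Surjective f) (hm : ∀ a b, f (a * b) = f a * f b) : f 1 = 1 := by
  obtain ⟨u, hu⟩ := hs 1
  calc f 1 = f 1 * f u := by rw [hu, mul_one]
    _ = 1 := by rw [← hm, one_mul, hu]

section CompositionAlgebra

variable {F C : Type*} [Field F] [NonAssocRing C] [Module F C] {n : QuadraticForm F C}

theorem polar_mul_mul_left (hcomp : ∀ x y : C, n (x * y) = n x * n y) (x y z : C) :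
    polar n (x * y) (x * z) = n x * polar n y z := by
  simp only [polar, ← mul_add, hcomp]
  ring

theorem polar_mul_mul_add_polar_mul_mul (hcomp : ∀ x y : C, n (x * y) = n x * n y)
    (w x y z : C) :
    polar n (x * y) (w * z) + polar n (w * y) (x * z) = polar n x w * polar n y z := by
  have h := polar_mul_mul_left hcomp (x + w) y z
  rw [add_mul, add_mul, polar_add_left, polar_add_right, polar_add_right,
    QuadraticMap.map_add (⇑n)] at h
  linear_combination h - polar_mul_mul_left hcomp x y z - polar_mul_mul_left hcomp w y z

theorem polar_mul_left_add_polar_mul_right (hcomp : ∀ x y : C, n (x * y) = n x * n y)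
    (x y z : C) : polar n (x * y) z + polar n y (x * z) = polar n x 1 * polar n y z := by
  simpa only [one_mul] using polar_mul_mul_add_polar_mul_mul hcomp 1 x y z

theorem mul_self_eq_polar_one_smul_sub (hcomp : ∀ x y : C, n (x * y) = n x * n y)
    (hnd : (polarBilin n).SeparatingLeft) (x : C) : x * x = polar n x 1 • x - n x • 1 := by
  refine sub_eq_zero.mp (hnd _ fun w => ?_)
  have h := polar_mul_mul_left hcomp x 1 w
  rw [mul_one] at h
  simp only [polarBilin_apply_apply, polar_sub_left, polar_smul_left, smul_eq_mul]
  linear_combination polar_mul_left_add_polar_mul_right hcomp x x w - h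

theorem isIdempotentElem_inv_polar_one_smul (hcomp : ∀ x y : C, n (x * y) = n x * n y)
    (hnd : (polarBilin n).SeparatingLeft) {z : C} (hz : n z = 0) (hz1 : polar n z 1 ≠ 0) :
    IsIdempotentElem ((polar n z 1)⁻¹ • z) := by
  rw [IsIdempotentElem, mul_self_eq_polar_one_smul_sub hcomp hnd, polar_smul_left,
    QuadraticMap.map_smul, hz, smul_eq_mul, inv_mul_cancel₀ hz1]
  simp

theorem mem_span_isIdempotentElem_of_isotropic (hcomp : ∀ x y : C, n (x * y) = n x * n y)
    (hnd : (polarBilin n).SeparatingLeft) {z : C} (hz : n z = 0) :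
    z ∈ Submodule.span F {e : C | IsIdempotentElem e} := by
  have key : ∀ {z : C}, n z = 0 → polar n z 1 ≠ 0 →
      z ∈ Submodule.span F {e : C | IsIdempotentElem e} := fun {z} hz hz1 => by
    have he : (polar n z 1)⁻¹ • z ∈ {e : C | IsIdempotentElem e} :=
      isIdempotentElem_inv_polar_one_smul hcomp hnd hz hz1
    simpa [smul_smul, mul_inv_cancel₀ hz1] using
      Submodule.smul_mem _ (polar n z 1) (Submodule.subset_span he)
  by_cases hz1 : polar n z 1 = 0
  · by_cases hz0 : z = 0
    · exact hz0 ▸ Submodule.zero_mem _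
    obtain ⟨w, hw⟩ : ∃ w, polar n z w ≠ 0 := by
      by_contra! h
      exact hz0 (hnd z h)
    have hzw : n (z * w) = 0 := by rw [hcomp, hz, zero_mul]
    have hzw1 : polar n (z * w) 1 = -polar n z w := by
      have h := polar_mul_left_add_polar_mul_right hcomp z w 1
      rw [mul_one, hz1, zero_mul, polar_comm n w z] at h
      linear_combination h
    have hzzw : polar n z (z * w) = 0 := by
      simpa [hz] using polar_mul_mul_left hcomp z 1 w
    have hsum : n (z + z * w) = 0 := by
      rw [QuadraticMap.map_add (⇑n), hz, hzw, hzzw, add_zero, add_zero]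
    have hsum1 : polar n (z + z * w) 1 ≠ 0 := by
      rwa [polar_add_left, hz1, zero_add, hzw1, neg_ne_zero]
    simpa using Submodule.sub_mem _ (key hsum hsum1) (key hzw (by rwa [hzw1, neg_ne_zero]))
  · exact key hz hz1

theorem span_isIdempotentElem_eq_top (hcomp : ∀ x y : C, n (x * y) = n x * n y)
    (hnd : (polarBilin n).SeparatingLeft) (hiso : ¬n.Anisotropic) :
    Submodule.span F {e : C | IsIdempotentElem e} = ⊤ :=
  eq_top_iff.mpr <| (span_isotropic_eq_top hnd hiso).ge.trans <|
    Submodule.span_le.mpr fun _ hz => mem_span_isIdempotentElem_of_isotropic hcomp hnd hz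

theorem norm_map_eq_of_bijective_of_map_mul (hcomp : ∀ x y : C, n (x * y) = n x * n y)
    (hnd : (polarBilin n).SeparatingLeft) {ψ : C →ₗ[F] C} (hbij : Function.Bijective ψ)
    (hm : ∀ a b, ψ (a * b) = ψ a * ψ b) (x : C) : n (ψ x) = n x := by
  have h1 : ψ 1 = 1 := map_one_of_surjective_of_map_mul hbij.2 hm
  by_cases hfix : ψ x = x
  · rw [hfix]
  have hnot_scalar : ∀ c : F, ψ x ≠ c • 1 := fun c hc => hfix <| by
    rw [hc, hbij.1 (show ψ x = ψ (c • 1) by rw [hc, map_smul, h1])]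
  have key : (polar n x 1 - polar n (ψ x) 1) • ψ x = (n x - n (ψ x)) • (1 : C) := by
    have h := congrArg ψ (mul_self_eq_polar_one_smul_sub hcomp hnd x)
    rw [hm, mul_self_eq_polar_one_smul_sub hcomp hnd, map_sub, map_smul, map_smul, h1] at h
    rw [sub_smul, sub_smul]
    exact sub_eq_sub_iff_sub_eq_sub.mp h.symm
  by_cases hα : polar n x 1 - polar n (ψ x) 1 = 0
  · rw [hα, zero_smul, eq_comm, smul_eq_zero] at key
    rcases key with h | h
    · exact (sub_eq_zero.mp h).symm
    · exact absurd (by rw [zero_smul, ← mul_one (ψ x), h, mul_zero]) (hnot_scalar 0)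
  · refine absurd ?_ (hnot_scalar ((polar n x 1 - polar n (ψ x) 1)⁻¹ * (n x - n (ψ x))))
    rw [mul_smul, ← key, smul_smul, inv_mul_cancel₀ hα, one_smul]

variable (F) in
def IsTwoLocalAut (φ : C → C) : Prop :=
  ∀ x y : C, ∃ ψ : C →ₗ[F] C, (Function.Bijective ψ ∧ ∀ a b : C, ψ (a * b) = ψ a * ψ b) ∧
    φ x = ψ x ∧ φ y = ψ y

namespace IsTwoLocalAut

theorem polar_map_map (hcomp : ∀ x y : C, n (x * y) = n x * n y)
    (hnd : (polarBilin n).SeparatingLeft) {φ : C → C} (hφ : IsTwoLocalAut F φ) (x y : C) :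
    polar n (φ x) (φ y) = polar n x y := by
  obtain ⟨ψ, ⟨hbij, hm⟩, hx, hy⟩ := hφ x y
  simp only [polar, hx, hy, ← map_add, norm_map_eq_of_bijective_of_map_mul hcomp hnd hbij hm]

theorem map_isIdempotentElem_mul (halt : ∀ x y : C, x * (x * y) = (x * x) * y)
    {φ : C →ₗ[F] C} (hφ : IsTwoLocalAut F φ) {e : C} (he : IsIdempotentElem e) (y : C) :
    φ (e * y) = φ e * φ y := by
  obtain ⟨ψ, ⟨-, hψ⟩, hψe, hψey⟩ := hφ e (e * y)
  obtain ⟨ψ', ⟨-, hψ'⟩, hψ'e, hψ'y⟩ := hφ e (y - e * y)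
  have hidem : φ e * φ e = φ e := by rw [hψe, ← hψ, he.eq]
  have hproj : ∀ v, φ e * (φ e * v) = φ e * v := fun v => by rw [halt, hidem]
  have h₁ : φ e * φ (e * y) = φ (e * y) := by rw [hψey, hψ, ← hψe, hproj]
  have h₂ : φ e * φ (y - e * y) = 0 := by
    rw [hψ'y, map_sub, hψ', ← hψ'e, mul_sub, hproj, sub_self]
  calc φ (e * y) = φ e * φ (e * y) + φ e * φ (y - e * y) := by rw [h₁, h₂, add_zero]
    _ = φ e * φ y := by rw [← mul_add, ← map_add, add_sub_cancel]

theorem map_mul [IsScalarTower F C C] (halt : ∀ x y : C, x * (x * y) = (x * x) * y)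
    (hspan : Submodule.span F {e : C | IsIdempotentElem e} = ⊤) {φ : C →ₗ[F] C}
    (hφ : IsTwoLocalAut F φ) (x y : C) : φ (x * y) = φ x * φ y := by
  have hx : x ∈ Submodule.span F {e : C | IsIdempotentElem e} := hspan ▸ Submodule.mem_top
  induction hx using Submodule.span_induction with
  | mem e he => exact hφ.map_isIdempotentElem_mul halt he y
  | zero => simp
  | add a b _ _ ha hb => rw [add_mul, map_add, ha, hb, map_add, add_mul]
  | smul c a _ ha => rw [smul_mul_assoc, map_smul, ha, map_smul, smul_mul_assoc]

end IsTwoLocalAut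

end CompositionAlgebra

theorem split_cayley_two_local_aut_is_aut_general {F : Type*} [Field F] {C : Type*} [NonAssocRing C]
    [Module F C] [IsScalarTower F C C]
    (n : QuadraticForm F C)
    (hdim : Module.finrank F C = 8)
    (hcomp : ∀ x y : C, n (x * y) = n x * n y)
    (hnd : ∀ x : C, (∀ y : C, polar (⇑n) x y = 0) → x = 0)
    (halt : ∀ x y : C, x * (x * y) = (x * x) * y ∧ (x * y) * y = x * (y * y))
    (hsplit : ∃ x : C, x ≠ 0 ∧ n x = 0)
    (φ : C → C)
    (h2loc : ∀ x y : C, ∃ ψ : C →ₗ[F] C,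
      (Function.Bijective ψ ∧ ∀ a b : C, ψ (a * b) = ψ a * ψ b) ∧
      φ x = ψ x ∧ φ y = ψ y) :
    IsLinearMap F φ ∧ Function.Bijective φ ∧ ∀ x y : C, φ (x * y) = φ x * φ y := by
  have : FiniteDimensional F C := .of_finrank_eq_succ hdim
  have hφ : IsTwoLocalAut F φ := h2loc
  replace hnd : (polarBilin n).SeparatingLeft := hnd
  obtain ⟨L, rfl⟩ := hnd.exists_linearEquiv_of_isometry (hφ.polar_map_map hcomp hnd)
  have hspan := span_isIdempotentElem_eq_top hcomp hnd ((not_anisotropic_iff_exists n).mpr hsplit)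
  exact ⟨L.toLinearMap.isLinear, L.bijective,
    IsTwoLocalAut.map_mul (φ := L.toLinearMap) (fun x y => (halt x y).1) hspan hφ⟩

/-- **Theorem `th:2local_split`.** Every 2-local automorphism of the split
Cayley algebra (the Cayley algebra with isotropic norm) is an automorphism. -/
theorem split_cayley_two_local_aut_is_aut {F : Type*} [Field F] {C : Type*} [NonAssocRing C]
    [Module F C] [SMulCommClass F C C] [IsScalarTower F C C]
    (n : QuadraticForm F C)
    (hdim : Module.finrank F C = 8)
    (hcomp : ∀ x y : C, n (x * y) = n x * n y)
    (hnd : ∀ x : C, (∀ y : C, polar (⇑n) x y = 0) → x = 0)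
    (halt : ∀ x y : C, x * (x * y) = (x * x) * y ∧ (x * y) * y = x * (y * y))
    (hsplit : ∃ x : C, x ≠ 0 ∧ n x = 0)
    (φ : C → C)
    (h2loc : ∀ x y : C, ∃ ψ : C →ₗ[F] C,
      (Function.Bijective ψ ∧ ∀ a b : C, ψ (a * b) = ψ a * ψ b) ∧
      φ x = ψ x ∧ φ y = ψ y) :
    IsLinearMap F φ ∧ Function.Bijective φ ∧ ∀ x y : C, φ (x * y) = φ x * φ y :=
  split_cayley_two_local_aut_is_aut_general n hdim hcomp hnd halt hsplit φ h2loc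
end

section
/- Let C be a Cayley algebra over a field F of characteristic 2 with anisotropic norm n, and let x, y ∈ C with n(x,1) = n(y,1) = 0, n(x,y) = 0, and 1, x, y linearly independent. Then xy = yx, the subspace S = F·1 + F·x + F·y + F·xy is totally isotropic for the polar form n(·,·), and dim S = 4. -/
open QuadraticMap

/-- Division Cayley algebra, characteristic 2: for traceless `x, y` with
`n(x,y) = 0` and `1, x, y` linearly independent, one has `xy = yx`, the subspace
`S = F·1 + F·x + F·y + F·xy` is totally isotropic for the polar form, and `dim S = 4`. -/
theorem division_cayley_char_two_totally_isotropic {F : Type*} [Field F] {C : Type*}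
    [NonAssocRing C] [Module F C] [SMulCommClass F C C] [IsScalarTower F C C]
    (n : QuadraticForm F C)
    (hdim : Module.finrank F C = 8)
    (hcomp : ∀ x y : C, n (x * y) = n x * n y)
    (hnd : ∀ x : C, (∀ y : C, polar (⇑n) x y = 0) → x = 0)
    (halt : ∀ x y : C, x * (x * y) = (x * x) * y ∧ (x * y) * y = x * (y * y))
    (haniso : ∀ x : C, n x = 0 → x = 0)
    (hchar : (2 : F) = 0)
    (x y : C)
    (htx : polar (⇑n) x 1 = 0) (hty : polar (⇑n) y 1 = 0)
    (hxy : polar (⇑n) x y = 0)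
    (hindep : LinearIndependent F ![1, x, y]) :
    x * y = y * x ∧
    (∀ s ∈ Submodule.span F {(1 : C), x, y, x * y},
      ∀ t ∈ Submodule.span F {(1 : C), x, y, x * y}, polar (⇑n) s t = 0) ∧
    Module.finrank F ↥(Submodule.span F {(1 : C), x, y, x * y}) = 4 := by
  -- characteristic two in `C`
  have h2C : ∀ c : C, c + c = 0 := by
    intro c
    have : (2 : F) • c = c + c := by
      rw [show (2 : F) = 1 + 1 by norm_num, add_smul, one_smul]
    rw [← this, hchar, zero_smul]
  have hflip : ∀ a b : C, a + b = 0 → a = b := by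
    intro a b h
    have hb : -b = b := neg_eq_of_add_eq_zero_left (h2C b)
    rw [← hb]; exact eq_neg_of_add_eq_zero_left h
  -- partial linearizations of the composition law
  have polL : ∀ a b d : C, polar (⇑n) (a*b) (a*d) = n a * polar (⇑n) b d := by
    intro a b d
    simp only [polar, ← left_distrib, hcomp]
    ring
  have polR : ∀ a b c : C, polar (⇑n) (a*b) (c*b) = polar (⇑n) a c * n b := by
    intro a b c
    simp only [polar, ← right_distrib, hcomp]
    ring
  -- full linearization
  have polF : ∀ a b c d : C, polar (⇑n) (a*b) (c*d) + polar (⇑n) (a*d) (c*b)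
      = polar (⇑n) a c * polar (⇑n) b d := by
    intro a b c d
    have h := hcomp (a+c) (b+d)
    rw [add_mul, mul_add, mul_add] at h
    rw [show a*b + a*d + (c*b + c*d) = (a*b + a*d) + (c*b + c*d) by ring] at h
    rw [QuadraticMap.map_add (⇑n) (a*b+a*d) (c*b+c*d)] at h
    rw [polar_add_left, polar_add_right, polar_add_right] at h
    rw [← mul_add a b d, ← mul_add c b d] at h
    rw [hcomp a (b+d), hcomp c (b+d)] at h
    rw [polR a b c, polR a d c] at h
    simp only [polar] at h ⊢
    rw [hcomp a b, hcomp c d, hcomp a d, hcomp c b] at h ⊢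
    linear_combination h
  -- commutation: x*y = y*x
  have hcomm : x * y = y * x := by
    apply hflip
    apply hnd
    intro z
    rw [polar_add_left]
    have E1 := polF x y 1 z
    have E2 := polF x z y 1
    have E3 := polF y z 1 x
    rw [one_mul, one_mul] at E1 E3
    rw [mul_one, mul_one] at E2
    simp only [htx, hxy, hty, zero_mul, mul_zero] at E1 E2 E3
    have hc : polar (⇑n) x (y*z) = polar (⇑n) (y*z) x := polar_comm _ _ _
    linear_combination E1 - E2 + E3 + hc
  -- squares of traceless elements
  have hsq : ∀ w : C, polar (⇑n) w 1 = 0 → w * w = n w • 1 := by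
    intro w hw
    apply hflip
    apply hnd
    intro z
    rw [polar_add_left, polar_smul_left]
    have E1 := polF w w 1 z
    rw [one_mul, one_mul, hw, zero_mul] at E1
    have E2 : polar (⇑n) (w*z) (w*1) = n w * polar (⇑n) z 1 := polL w z 1
    rw [mul_one] at E2
    have hc : polar (⇑n) z 1 = polar (⇑n) 1 z := polar_comm _ _ _
    rw [smul_eq_mul]
    linear_combination E1 - E2 - n w * hc
  -- remaining polar values on generators
  have hxy1 : polar (⇑n) (x*y) 1 = 0 := by
    have E1 := polF x y 1 1
    rw [one_mul, one_mul, mul_one, htx, hxy, zero_mul] at E1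
    linear_combination E1
  have hxyx : polar (⇑n) (x*y) x = 0 := by
    have := polL x y 1
    rw [mul_one, hty, mul_zero] at this
    exact this
  have hxyy : polar (⇑n) (x*y) y = 0 := by
    have := polR x y 1
    rw [one_mul, htx, zero_mul] at this
    exact this
  have hself : ∀ c : C, polar (⇑n) c c = 0 := by
    intro c
    rw [polar_self, two_smul]
    have : n c + n c = (2 : F) * n c := by ring
    rw [this, hchar, zero_mul]
  -- coefficients extraction from linear independence of 1, x, y
  have hcoef : ∀ a b c : F, a • (1:C) + b • x + c • y = 0 → a = 0 ∧ b = 0 ∧ c = 0 := by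
    intro a b c h
    have h' := Fintype.linearIndependent_iff.mp hindep ![a, b, c] ?_
    · exact ⟨h' 0, h' 1, h' 2⟩
    · simpa [Fin.sum_univ_three] using h
  have hone : (1 : C) ≠ 0 := by
    have := hindep.ne_zero 0
    simpa using this
  -- x*y is not in the span of 1, x, y
  have hnotin : ∀ δ μ ν : F, x * y ≠ δ • (1:C) + μ • x + ν • y := by
    intro δ μ ν h
    have hx2 : x * x = n x • 1 := hsq x htx
    have hA : x * (x * y) = n x • y := by
      rw [(halt x y).1, hx2, smul_mul_assoc, one_mul]
    have hB : x * (x * y) = (μ * n x + ν * δ) • (1:C) + (δ + ν * μ) • x + (ν * ν) • y := by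
      rw [h]
      rw [mul_add, mul_add, mul_smul_comm, mul_smul_comm, mul_smul_comm, mul_one, hx2, h]
      rw [smul_smul, smul_add, smul_add, smul_smul, smul_smul, smul_smul]
      module
    have h0 : (μ * n x + ν * δ) • (1:C) + (δ + ν * μ) • x + (ν * ν - n x) • y = 0 := by
      have := hA.symm.trans hB
      rw [sub_smul]
      rw [show (μ * n x + ν * δ) • (1:C) + (δ + ν * μ) • x + ((ν*ν) • y - n x • y)
        = ((μ * n x + ν * δ) • (1:C) + (δ + ν * μ) • x + (ν*ν) • y) - n x • y by abel]
      rw [← this]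
      abel
    obtain ⟨hc1, hc2, hc3⟩ := hcoef _ _ _ h0
    -- u = x + ν•1, v = y + μ•1 are nonzero with u * v = 0
    have hδ : δ = ν * μ := by
      have := hflip ((δ : F) • (1:C)) ((ν * μ) • (1:C)) ?_
      · exact smul_left_injective F hone |>.eq_iff.mp this
      · rw [← add_smul, hc2, zero_smul]
    have huv : (x + ν • (1:C)) * (y + μ • (1:C)) = 0 := by
      calc (x + ν • (1:C)) * (y + μ • (1:C))
          = ((ν*μ) • (1:C) + μ • x + ν • y) + ((ν*μ) • (1:C) + μ • x + ν • y) := by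
            rw [mul_add, add_mul, add_mul, h, hδ, mul_smul_comm, mul_one,
              smul_mul_assoc, one_mul, smul_mul_assoc, mul_smul_comm, mul_one, smul_smul]
            module
        _ = 0 := h2C _
    have := hcomp (x + ν • (1:C)) (y + μ • (1:C))
    rw [huv, map_zero] at this
    rcases mul_eq_zero.mp this.symm with h1 | h1
    · have hu := haniso _ h1
      have := hcoef ν 1 0 ?_
      · exact one_ne_zero this.2.1
      · rw [zero_smul, add_zero, one_smul, add_comm]; exact hu
    · have hv := haniso _ h1
      have := hcoef μ 0 1 ?_
      · exact one_ne_zero this.2.2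
      · rw [zero_smul, one_smul, add_comm (μ • (1:C)) 0, zero_add, add_comm]; exact hv
  -- linear independence of 1, x, y, x*y
  have hindep4 : LinearIndependent F ![1, x, y, x * y] := by
    rw [Fintype.linearIndependent_iff]
    intro g hg
    rw [Fin.sum_univ_four] at hg
    simp only [Matrix.cons_val_zero, Matrix.cons_val_one, Matrix.head_cons,
      Matrix.cons_val_two, Matrix.tail_cons, Matrix.cons_val_three] at hg
    by_cases h3 : g 3 = 0
    · rw [h3, zero_smul, add_zero] at hg
      obtain ⟨h0, h1, h2⟩ := hcoef _ _ _ hg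
      intro i; fin_cases i <;> assumption
    · exfalso
      apply hnotin (-(g 3)⁻¹ * g 0) (-(g 3)⁻¹ * g 1) (-(g 3)⁻¹ * g 2)
      have key : g 3 • (x*y) = -(g 0 • (1:C) + g 1 • x + g 2 • y) := by
        rw [eq_neg_iff_add_eq_zero]
        calc g 3 • (x*y) + (g 0 • (1:C) + g 1 • x + g 2 • y)
            = g 0 • (1:C) + g 1 • x + g 2 • y + g 3 • (x*y) := by abel
          _ = 0 := hg
      have : (x*y) = (g 3)⁻¹ • (-(g 0 • (1:C) + g 1 • x + g 2 • y)) := by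
        rw [← key, inv_smul_smul₀ h3]
      rw [this]
      simp only [smul_neg, neg_smul, smul_add, smul_smul]
      module
  -- the set equals the range of the 4-tuple
  have hset : ({(1 : C), x, y, x * y} : Set C) = Set.range ![1, x, y, x * y] := by
    ext c
    simp only [Set.mem_insert_iff, Set.mem_singleton_iff, Matrix.range_cons,
      Matrix.range_empty, Set.mem_union, Set.union_empty]
  refine ⟨hcomm, ?_, ?_⟩
  · -- totally isotropic
    intro s hs t ht
    induction hs, ht using Submodule.span_induction₂ with
    | mem_mem u v hu hv =>
      have hvals : ∀ a b : C, a ∈ ({(1 : C), x, y, x * y} : Set C) →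
          b ∈ ({(1 : C), x, y, x * y} : Set C) → polar (⇑n) a b = 0 := by
        intro a b ha hb
        simp only [Set.mem_insert_iff, Set.mem_singleton_iff] at ha hb
        have h1x : polar (⇑n) (1:C) x = 0 := by rw [polar_comm]; exact htx
        have h1y : polar (⇑n) (1:C) y = 0 := by rw [polar_comm]; exact hty
        have h1xy : polar (⇑n) (1:C) (x*y) = 0 := by rw [polar_comm]; exact hxy1
        have hyx : polar (⇑n) y x = 0 := by rw [polar_comm]; exact hxy
        have hxxy : polar (⇑n) x (x*y) = 0 := by rw [polar_comm]; exact hxyx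
        have hyxy : polar (⇑n) y (x*y) = 0 := by rw [polar_comm]; exact hxyy
        rcases ha with rfl | rfl | rfl | rfl <;> rcases hb with rfl | rfl | rfl | rfl <;>
          first
            | exact hself _
            | assumption
      exact hvals u v hu hv
    | zero_left v hv => simp [polar]
    | zero_right u hu => simp [polar]
    | add_left u v w hu hv hw h1 h2 => rw [polar_add_left, h1, h2, add_zero]
    | add_right u v w hu hv hw h1 h2 => rw [polar_add_right, h1, h2, add_zero]
    | smul_left r u v hu hv h1 => rw [polar_smul_left, h1, smul_zero]
    | smul_right r u v hu hv h1 => rw [polar_smul_right, h1, smul_zero]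
  · rw [hset, finrank_span_eq_card hindep4]
    rfl
end
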